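/- arXiv:2201.09713 — 6 statements merged into one kernel-verified Lean document; each statement's English description precedes it below -/
import Mathlib

section
/- Let U ⊂ ℝ^N be a bounded open set and F ∈ L¹(U;ℝ^N) an L¹-divergence-measure field with divergence measure μ. For any bounded Lipschitz function g : ℝ^N → ℝ define T(g) = ∫_U ∇g(x)·F(x) dx + ∫_U g(x) dμ(x). Then T(g) depends only on the restriction of g to ∂U: if g₁, g₂ are bounded Lipschitz functions on ℝ^N with g₁ = g₂ on ∂U, then T(g₁) = T(g₂). Moreover, |T(g)| ≤ ( ‖F‖_{L¹(U;ℝ^N)} + |μ|(U) ) · ( sup_{x∈∂U} |g(x)| + Lip(g|_{∂U}) ), where Lip(g|_{∂U}) is the Lipschitz constant of the restriction of g to ∂U and |μ| is the total variation measure of μ. -/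
/-!
Mollifying a compactly supported Lipschitz `u` with `tsupport u ⊆ U` gives `C¹_c(U)` functions
whose gradients are bounded by `Lip u` and converge a.e. to `∇u` (Rademacher and Lebesgue
differentiation), so by dominated convergence `∫_U ∇u · F = -∫_U u dμ` holds for such `u`.
A Lipschitz `h` vanishing on `∂U` satisfies `|h| ≤ Lip(h) · dist(·, Uᶜ)` on `U`; clamping `h`
between `±2 Lip(h) (dist(·, Uᶜ) - ε)⁺` yields uniformly Lipschitz functions compactly supported
in `U` that coincide with `h` where `dist(·, Uᶜ) ≥ 2ε`, and letting `ε → 0` gives `T(h) = 0`.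
By linearity `T(g)` depends only on `g|∂U`. For the bound, `g` is replaced by a McShane extension
of `g|∂U` with Lipschitz constant `Lip(g|∂U)`, truncated at `sup_{∂U} |g|`, and the two terms of
`T` are estimated separately.
-/

open MeasureTheory Filter Topology NNReal

noncomputable section

namespace DMF

/-- The integral `∫_U g dμ` of a function against a signed measure, via the Jordan
decomposition `μ = μ⁺ − μ⁻`. -/
def sintegralOn {E : Type*} [MeasurableSpace E] (μ : MeasureTheory.SignedMeasure E)
    (U : Set E) (g : E → ℝ) : ℝ :=
  (∫ x in U, g x ∂μ.toJordanDecomposition.posPart) -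
    ∫ x in U, g x ∂μ.toJordanDecomposition.negPart

/-- The generalized Gauss–Green functional `T(g) = ∫_U ∇g·F dx + ∫_U g dμ`. -/
def gaussGreen {N : ℕ} (U : Set (EuclideanSpace ℝ (Fin N)))
    (F : EuclideanSpace ℝ (Fin N) → EuclideanSpace ℝ (Fin N))
    (μ : MeasureTheory.SignedMeasure (EuclideanSpace ℝ (Fin N)))
    (g : EuclideanSpace ℝ (Fin N) → ℝ) : ℝ :=
  (∫ x in U, fderiv ℝ g x (F x)) + sintegralOn μ U g

/-- The Lipschitz constant of the restriction of `g` to a set `Γ`. -/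
def lipConstOn {N : ℕ} (Γ : Set (EuclideanSpace ℝ (Fin N)))
    (g : EuclideanSpace ℝ (Fin N) → ℝ) : ℝ :=
  sInf {c : ℝ | 0 ≤ c ∧ ∀ x ∈ Γ, ∀ y ∈ Γ, |g x - g y| ≤ c * ‖x - y‖}

open Metric Convolution ContinuousLinearMap Set
open scoped Pointwise

section Pairing

variable {X E : Type*} [MeasurableSpace X] {ν : Measure X} [NormedAddCommGroup E]
  [NormedSpace ℝ E] {F : X → E} {K : ℝ}

lemma _root_.MeasureTheory.AEStronglyMeasurable.clm_apply_apply {Φ : X → E →L[ℝ] ℝ}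
    (hΦ : AEStronglyMeasurable Φ ν) (hF : AEStronglyMeasurable F ν) :
    AEStronglyMeasurable (fun x => Φ x (F x)) ν :=
  isBoundedBilinearMap_apply.continuous.comp_aestronglyMeasurable (hΦ.prodMk hF)

lemma integrable_clm_apply_of_norm_le {Φ : X → E →L[ℝ] ℝ} (hΦ : AEStronglyMeasurable Φ ν)
    (hK : ∀ x, ‖Φ x‖ ≤ K) (hF : Integrable F ν) : Integrable (fun x => Φ x (F x)) ν :=
  (hF.norm.const_mul K).mono' (hΦ.clm_apply_apply hF.1)
    (Eventually.of_forall fun x => (Φ x).le_of_opNorm_le (hK x) _)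

lemma abs_integral_clm_apply_le {Φ : X → E →L[ℝ] ℝ} (hK : ∀ x, ‖Φ x‖ ≤ K)
    (hF : Integrable F ν) : |∫ x, Φ x (F x) ∂ν| ≤ K * ∫ x, ‖F x‖ ∂ν := by
  rw [← integral_const_mul, ← Real.norm_eq_abs]
  exact norm_integral_le_of_norm_le (hF.norm.const_mul K)
    (Eventually.of_forall fun x => (Φ x).le_of_opNorm_le (hK x) _)

lemma tendsto_integral_clm_apply {Φ : ℕ → X → E →L[ℝ] ℝ} {Ψ : X → E →L[ℝ] ℝ}
    (hΦ : ∀ n, AEStronglyMeasurable (Φ n) ν) (hK : ∀ n x, ‖Φ n x‖ ≤ K) (hF : Integrable F ν)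
    (hlim : ∀ᵐ x ∂ν, Tendsto (fun n => Φ n x) atTop (𝓝 (Ψ x))) :
    Tendsto (fun n => ∫ x, Φ n x (F x) ∂ν) atTop (𝓝 (∫ x, Ψ x (F x) ∂ν)) :=
  tendsto_integral_of_dominated_convergence (fun x => K * ‖F x‖)
    (fun n => (hΦ n).clm_apply_apply hF.1) (hF.norm.const_mul K)
    (fun n => Eventually.of_forall fun x => (Φ n x).le_of_opNorm_le (hK n x) _)
    (hlim.mono fun x hx => ((apply ℝ ℝ (F x)).continuous.tendsto _).comp hx)

end Pairing

section SignedIntegral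

variable {X : Type*} [MeasurableSpace X] {μ : SignedMeasure X} {U : Set X}

lemma integrable_of_abs_le {ν : Measure X} [IsFiniteMeasure ν] {f : X → ℝ} (hf : Measurable f)
    {C : ℝ} (hC : ∀ x, |f x| ≤ C) : Integrable f ν :=
  .of_bound hf.aestronglyMeasurable C (Eventually.of_forall hC)

lemma sintegralOn_sub {f g : X → ℝ} (hf : Measurable f) (hg : Measurable g) {C₁ C₂ : ℝ}
    (hf' : ∀ x, |f x| ≤ C₁) (hg' : ∀ x, |g x| ≤ C₂) :
    sintegralOn μ U (fun x => f x - g x) = sintegralOn μ U f - sintegralOn μ U g := by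
  simp only [sintegralOn]
  rw [integral_sub (integrable_of_abs_le hf hf') (integrable_of_abs_le hg hg'),
    integral_sub (integrable_of_abs_le hf hf') (integrable_of_abs_le hg hg')]
  ring

lemma tendsto_sintegralOn (hU : MeasurableSet U) {f : ℕ → X → ℝ} {g : X → ℝ} {C : ℝ}
    (hf : ∀ n, Measurable (f n)) (hC : ∀ n x, |f n x| ≤ C)
    (hlim : ∀ x ∈ U, Tendsto (fun n => f n x) atTop (𝓝 (g x))) :
    Tendsto (fun n => sintegralOn μ U (f n)) atTop (𝓝 (sintegralOn μ U g)) := by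
  have h (ν : Measure X) [IsFiniteMeasure ν] :
      Tendsto (fun n => ∫ x in U, f n x ∂ν) atTop (𝓝 (∫ x in U, g x ∂ν)) :=
    tendsto_integral_of_dominated_convergence (fun _ => C)
      (fun n => (hf n).aestronglyMeasurable) (integrable_const C)
      (fun n => Eventually.of_forall (hC n)) (ae_restrict_of_forall_mem hU hlim)
  exact (h _).sub (h _)

lemma abs_sintegralOn_le {g : X → ℝ} {M : ℝ} (hM : ∀ x, |g x| ≤ M) :
    |sintegralOn μ U g| ≤ M * (μ.totalVariation U).toReal := by
  have h (ν : Measure X) [IsFiniteMeasure ν] : |∫ x in U, g x ∂ν| ≤ M * (ν U).toReal := by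
    simpa only [Real.norm_eq_abs, measureReal_def] using
      norm_setIntegral_le_of_norm_le_const (f := g) (measure_lt_top ν U) fun x _ => hM x
  rw [SignedMeasure.totalVariation, Measure.add_apply,
    ENNReal.toReal_add (measure_ne_top _ _) (measure_ne_top _ _), mul_add]
  exact (abs_sub _ _).trans (add_le_add (h _) (h _))

end SignedIntegral

theorem _root_.LipschitzWith.norm_smul_sub_le {E G : Type*} [NormedAddCommGroup E]
    [NormedSpace ℝ E] [NormedAddCommGroup G] [NormedSpace ℝ G] {u : E → G} {K : ℝ≥0}
    (hu : LipschitzWith K u) (x v : E) (a : ℝ) : ‖a • (u (x + a⁻¹ • v) - u x)‖ ≤ K * ‖v‖ := by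
  rcases eq_or_ne a 0 with rfl | ha
  · simp only [zero_smul, norm_zero]; positivity
  calc ‖a • (u (x + a⁻¹ • v) - u x)‖ ≤ ‖a‖ * (K * ‖a⁻¹ • v‖) := by
        rw [norm_smul]
        gcongr
        simpa using hu.norm_sub_le (x + a⁻¹ • v) x
    _ = K * ‖v‖ := by
        rw [norm_smul, norm_inv]
        field_simp [norm_ne_zero_iff.2 ha]

theorem exists_contDiffBump_seq {E : Type*} [NormedAddCommGroup E] [NormedSpace ℝ E]
    [HasContDiffBump E] {r : ℝ} (hr : 0 < r) :
    ∃ φ : ℕ → ContDiffBump (0 : E), (∀ n, (φ n).rOut ≤ r ∧ (φ n).rOut ≤ 2 * (φ n).rIn) ∧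
      Tendsto (fun n => (φ n).rOut) atTop (𝓝 0) := by
  refine ⟨fun n => ⟨r / (2 * (n + 1)), r / (n + 1), by positivity,
    div_lt_div_of_pos_left hr (by positivity) (by linarith)⟩, fun n => ⟨?_, ?_⟩, ?_⟩
  · exact div_le_self hr.le (by simp)
  · rw [mul_div_assoc', mul_div_mul_left _ _ two_ne_zero]
  · exact tendsto_const_nhds.div_atTop
      (tendsto_atTop_add_const_right _ 1 tendsto_natCast_atTop_atTop)

def HasDivergenceMeasure {E : Type*} [NormedAddCommGroup E] [NormedSpace ℝ E] [MeasurableSpace E]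
    (ν : Measure E) (U : Set E) (F : E → E) (μ : SignedMeasure E) : Prop :=
  ∀ φ : E → ℝ, ContDiff ℝ 1 φ → HasCompactSupport φ → tsupport φ ⊆ U →
    ∫ x in U, fderiv ℝ φ x (F x) ∂ν = -sintegralOn μ U φ

section Mollification

variable {E : Type*} [NormedAddCommGroup E] [NormedSpace ℝ E] [FiniteDimensional ℝ E]
  [MeasurableSpace E] [BorelSpace E] {ν : Measure E} [ν.IsAddHaarMeasure]
  {G : Type*} [NormedAddCommGroup G] [NormedSpace ℝ G] {U : Set E} {F : E → E}
  {μ : SignedMeasure E}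

theorem _root_.LipschitzWith.locallyIntegrable_fderiv {u : E → ℝ} {K : ℝ≥0}
    (hu : LipschitzWith K u) : LocallyIntegrable (fderiv ℝ u) ν :=
  (memLp_top_of_bound (measurable_fderiv ℝ u).aestronglyMeasurable K
    (Eventually.of_forall fun _ => norm_fderiv_le_of_lipschitz ℝ hu)).locallyIntegrable le_top

theorem fderiv_convolution_of_lipschitz {ρ : E → ℝ} (hρs : HasCompactSupport ρ)
    (hρc : Continuous ρ) {u : E → ℝ} {K : ℝ≥0} (hu : LipschitzWith K u) {x : E}
    (hx : DifferentiableAt ℝ (ρ ⋆[lsmul ℝ ℝ, ν] u) x) :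
    fderiv ℝ (ρ ⋆[lsmul ℝ ℝ, ν] u) x = (ρ ⋆[lsmul ℝ ℝ, ν] fderiv ℝ u) x := by
  ext v
  have hc : Tendsto (fun n : ℕ => ‖(n : ℝ)‖) atTop atTop :=
    tendsto_norm_atTop_atTop.comp tendsto_natCast_atTop_atTop
  have hu_conv :=
    hρs.convolutionExists_left (lsmul ℝ ℝ) hρc (hu.continuous.locallyIntegrable (μ := ν))
  have hW_conv :=
    hρs.convolutionExists_left (lsmul ℝ ℝ) hρc (hu.locallyIntegrable_fderiv (ν := ν)) x
  have hquot (n : ℕ) :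
      (n : ℝ) • ((ρ ⋆[lsmul ℝ ℝ, ν] u) (x + (n : ℝ)⁻¹ • v) - (ρ ⋆[lsmul ℝ ℝ, ν] u) x)
        = ∫ t, ρ t * ((n : ℝ) * (u (x - t + (n : ℝ)⁻¹ • v) - u (x - t))) ∂ν := by
    rw [convolution_def, convolution_def, ← integral_sub (hu_conv _) (hu_conv _),
      ← integral_smul]
    congr 1 with t
    simp only [lsmul_apply, smul_eq_mul, sub_add_eq_add_sub]
    ring
  have hdiff : ∀ᵐ t ∂ν, DifferentiableAt ℝ u (x - t) :=
    (quasiMeasurePreserving_sub_left ν x).ae hu.ae_differentiableAt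
  -- The difference quotients of `u` are dominated by `K ‖v‖` and converge wherever `u` is
  -- differentiable, which by Rademacher is almost everywhere.
  refine tendsto_nhds_unique (hx.hasFDerivAt.lim v hc) ?_
  simp only [hquot]
  rw [convolution_def, integral_apply hW_conv]
  simp only [lsmul_apply, smul_apply, smul_eq_mul]
  refine tendsto_integral_of_dominated_convergence (fun t => ‖ρ t‖ * (K * ‖v‖))
    (fun n => ?_) ((hρc.integrable_of_hasCompactSupport hρs).norm.mul_const _)
    (fun n => Eventually.of_forall fun t => ?_) (hdiff.mono fun t ht => ?_)
  · have := hu.continuous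
    fun_prop
  · rw [norm_mul]
    gcongr
    exact hu.norm_smul_sub_le _ v n
  · simpa using ((ht.hasFDerivAt.lim v hc).const_mul (ρ t))

theorem _root_.ContDiffBump.norm_normed_convolution_le [CompleteSpace G]
    (φ : ContDiffBump (0 : E)) {g : E → G} (hg : AEStronglyMeasurable g ν) {K : ℝ}
    (hK : ∀ x, ‖g x‖ ≤ K) (x : E) :
    ‖(φ.normed ν ⋆[lsmul ℝ ℝ, ν] g) x‖ ≤ K := by
  simpa using dist_convolution_le (z₀ := 0) ((norm_nonneg _).trans (hK 0))
    φ.support_normed_eq.subset φ.nonneg_normed φ.integral_normed hg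
    fun y _ => by simpa using hK y

theorem _root_.ContDiffBump.tsupport_normed_convolution_subset (φ : ContDiffBump (0 : E))
    (g : E → G) : tsupport (φ.normed ν ⋆[lsmul ℝ ℝ, ν] g) ⊆ cthickening φ.rOut (tsupport g) := by
  refine closure_minimal ?_ isClosed_cthickening
  calc Function.support (φ.normed ν ⋆[lsmul ℝ ℝ, ν] g)
      ⊆ Function.support (φ.normed ν) + Function.support g := support_convolution_subset _
    _ ⊆ ball (0 : E) φ.rOut + tsupport g := by
        rw [φ.support_normed_eq]; exact add_subset_add_left (subset_tsupport g)
    _ = thickening φ.rOut (tsupport g) := ball_add_zero _ _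
    _ ⊆ cthickening φ.rOut (tsupport g) := thickening_subset_cthickening _ _

theorem tendsto_integral_fderiv_normed_convolution {φ : ℕ → ContDiffBump (0 : E)}
    (hφ : ∀ n, (φ n).rOut ≤ 2 * (φ n).rIn) (hφ0 : Tendsto (fun n => (φ n).rOut) atTop (𝓝 0))
    {u : E → ℝ} {K : ℝ≥0} (hu : LipschitzWith K u) (hF : IntegrableOn F U ν) :
    Tendsto (fun n => ∫ x in U, fderiv ℝ ((φ n).normed ν ⋆[lsmul ℝ ℝ, ν] u) x (F x) ∂ν) atTop
      (𝓝 (∫ x in U, fderiv ℝ u x (F x) ∂ν)) := by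
  have hW := hu.locallyIntegrable_fderiv (ν := ν)
  have hderiv (n : ℕ) : fderiv ℝ ((φ n).normed ν ⋆[lsmul ℝ ℝ, ν] u)
      = (φ n).normed ν ⋆[lsmul ℝ ℝ, ν] fderiv ℝ u := by
    have hsmooth : ContDiff ℝ 1 ((φ n).normed ν ⋆[lsmul ℝ ℝ, ν] u) :=
      (φ n).hasCompactSupport_normed.contDiff_convolution_left _ (φ n).contDiff_normed
        hu.continuous.locallyIntegrable
    funext x
    exact fderiv_convolution_of_lipschitz (φ n).hasCompactSupport_normed (φ n).continuous_normed
      hu ((hsmooth.differentiable one_ne_zero) x)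
  simp only [hderiv]
  exact tendsto_integral_clm_apply
    (fun n => ((φ n).hasCompactSupport_normed.continuous_convolution_left _
      (φ n).continuous_normed hW).aestronglyMeasurable)
    (fun n => (φ n).norm_normed_convolution_le (measurable_fderiv ℝ u).aestronglyMeasurable
      (fun _ => norm_fderiv_le_of_lipschitz ℝ hu))
    hF (ae_restrict_of_ae
      (ContDiffBump.ae_convolution_tendsto_right_of_locallyIntegrable hφ0
        (Eventually.of_forall hφ) hW))

theorem HasDivergenceMeasure.integral_fderiv_apply_of_lipschitz
    (hdiv : HasDivergenceMeasure ν U F μ) (hU : IsOpen U) (hF : IntegrableOn F U ν)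
    {u : E → ℝ} {K : ℝ≥0} (hu : LipschitzWith K u) (hcs : HasCompactSupport u)
    (hsupp : tsupport u ⊆ U) :
    ∫ x in U, fderiv ℝ u x (F x) ∂ν = -sintegralOn μ U u := by
  obtain ⟨δ, hδ, hδU⟩ := hcs.exists_thickening_subset_open hU hsupp
  obtain ⟨φ, hφ, hφ0⟩ := exists_contDiffBump_seq (E := E) (half_pos hδ)
  obtain ⟨B, hB⟩ := hcs.exists_bound_of_continuous hu.continuous
  set ψ := fun n => (φ n).normed ν ⋆[lsmul ℝ ℝ, ν] u
  have hψ (n : ℕ) : ContDiff ℝ 1 (ψ n) :=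
    (φ n).hasCompactSupport_normed.contDiff_convolution_left _ (φ n).contDiff_normed
      hu.continuous.locallyIntegrable
  have hψsupp (n : ℕ) : tsupport (ψ n) ⊆ cthickening (δ / 2) (tsupport u) :=
    ((φ n).tsupport_normed_convolution_subset u).trans (cthickening_mono (hφ n).1 _)
  have hcU : cthickening (δ / 2) (tsupport u) ⊆ U :=
    (cthickening_subset_thickening' hδ (half_lt_self hδ) _).trans hδU
  have hid (n : ℕ) : ∫ x in U, fderiv ℝ (ψ n) x (F x) ∂ν = -sintegralOn μ U (ψ n) :=
    hdiv _ (hψ n) (hcs.cthickening.of_isClosed_subset (isClosed_tsupport _) (hψsupp n))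
      ((hψsupp n).trans hcU)
  refine tendsto_nhds_unique (f := fun n => ∫ x in U, fderiv ℝ (ψ n) x (F x) ∂ν)
    (tendsto_integral_fderiv_normed_convolution (fun n => (hφ n).2) hφ0 hu hF) ?_
  simp only [hid]
  exact (tendsto_sintegralOn hU.measurableSet (fun n => (hψ n).continuous.measurable)
    (fun n => (φ n).norm_normed_convolution_le hu.continuous.aestronglyMeasurable hB)
    fun x _ => ContDiffBump.convolution_tendsto_right_of_continuous hφ0 hu.continuous x).neg

end Mollification

section Cutoff

variable {E : Type*} [MetricSpace E] {U : Set E} {K : ℝ≥0} {ε : ℝ} {h : E → ℝ}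

def distEnvelope (U : Set E) (K : ℝ≥0) (ε : ℝ) (x : E) : ℝ :=
  2 * K * max (infDist x Uᶜ - ε) 0

def boundaryCutoff (U : Set E) (K : ℝ≥0) (ε : ℝ) (h : E → ℝ) (x : E) : ℝ :=
  max (-distEnvelope U K ε x) (min (h x) (distEnvelope U K ε x))

lemma distEnvelope_nonneg (x : E) : 0 ≤ distEnvelope U K ε x := by
  unfold distEnvelope; positivity

lemma lipschitzWith_distEnvelope : LipschitzWith (2 * K) (distEnvelope U K ε) := by
  refine LipschitzWith.of_dist_le_mul fun x y => ?_
  have h := (lipschitz_infDist_pt Uᶜ).dist_le_mul x y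
  rw [Real.dist_eq] at h ⊢
  simp only [distEnvelope, ← mul_sub, abs_mul, abs_two, NNReal.abs_eq, NNReal.coe_mul,
    NNReal.coe_ofNat, NNReal.coe_one, one_mul] at h ⊢
  gcongr
  exact (abs_max_sub_max_le_abs _ _ _).trans (by rwa [sub_sub_sub_cancel_right])

lemma _root_.LipschitzWith.boundaryCutoff (hh : LipschitzWith K h) (U : Set E) (ε : ℝ) :
    LipschitzWith (2 * K) (boundaryCutoff U K ε h) := by
  have hb := lipschitzWith_distEnvelope (U := U) (K := K) (ε := ε)
  refine (hb.neg.max (hh.min hb)).weaken (max_le le_rfl (max_le ?_ le_rfl))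
  exact le_mul_of_one_le_left K.2 one_le_two

lemma abs_boundaryCutoff_le (x : E) : |boundaryCutoff U K ε h x| ≤ |h x| := by
  have hb := distEnvelope_nonneg (U := U) (K := K) (ε := ε) x
  have := neg_abs_le (h x)
  have := le_abs_self (h x)
  rw [boundaryCutoff, abs_le]
  constructor <;> grind

lemma boundaryCutoff_eq_of_abs_le {x : E} (hx : |h x| ≤ distEnvelope U K ε x) :
    boundaryCutoff U K ε h x = h x := by
  rw [boundaryCutoff, min_eq_left (abs_le.1 hx).2, max_eq_right (abs_le.1 hx).1]

lemma tsupport_boundaryCutoff_subset :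
    tsupport (boundaryCutoff U K ε h) ⊆ {x | ε ≤ infDist x Uᶜ} := by
  refine closure_minimal (fun x hx => ?_) (isClosed_le continuous_const (continuous_infDist_pt _))
  by_contra hε
  rw [mem_ofPred_eq, not_le] at hε
  refine hx ?_
  have h0 : distEnvelope U K ε x = 0 := by
    simp [distEnvelope, max_eq_right (sub_nonpos.2 hε.le)]
  simp [boundaryCutoff, h0]

lemma setOf_le_infDist_compl_subset (hε : 0 < ε) : {x | ε ≤ infDist x Uᶜ} ⊆ U := fun x hx => by
  by_contra hxU
  exact hε.not_ge (by simpa [infDist_zero_of_mem (show x ∈ Uᶜ from hxU)] using hx)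

end Cutoff

section BoundaryValues

variable {E : Type*} [NormedAddCommGroup E] [NormedSpace ℝ E] [FiniteDimensional ℝ E]

theorem _root_.LipschitzWith.abs_le_mul_infDist_compl {h : E → ℝ} {K : ℝ≥0}
    (hh : LipschitzWith K h) {U : Set E} (h0 : ∀ x ∈ frontier U, h x = 0) (hU : U ≠ univ)
    {x : E} (hx : x ∈ U) : |h x| ≤ K * infDist x Uᶜ := by
  obtain ⟨y, hy, hxy⟩ := exists_mem_frontier_infDist_compl_eq_dist hx hU
  simpa [hxy, h0 y hy, Real.dist_eq] using hh.dist_le_mul x y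

theorem eventually_boundaryCutoff_eventuallyEq {h : E → ℝ} {K : ℝ≥0} (hh : LipschitzWith K h)
    {U : Set E} (hU : IsOpen U) (h0 : ∀ x ∈ frontier U, h x = 0) (hUu : U ≠ univ) {x : E}
    (hx : x ∈ U) : ∀ᶠ ε in 𝓝 0, boundaryCutoff U K ε h =ᶠ[𝓝 x] h := by
  have hdx : 0 < infDist x Uᶜ :=
    (hU.isClosed_compl.notMem_iff_infDist_pos (nonempty_compl.2 hUu)).1 (not_not.2 hx)
  filter_upwards [(tendsto_id.const_mul 2).eventually (gt_mem_nhds (a := infDist x Uᶜ)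
    (by simpa using hdx))] with ε hε
  have hV : {y | 2 * ε < infDist y Uᶜ} ∩ U ∈ 𝓝 x :=
    inter_mem ((isOpen_lt continuous_const (continuous_infDist_pt _)).mem_nhds hε)
      (hU.mem_nhds hx)
  filter_upwards [hV] with y ⟨hy, hyU⟩
  refine boundaryCutoff_eq_of_abs_le ((hh.abs_le_mul_infDist_compl h0 hUu hyU).trans ?_)
  rw [mem_ofPred_eq] at hy
  have hd : infDist y Uᶜ ≤ 2 * max (infDist y Uᶜ - ε) 0 := by
    linarith [le_max_left (infDist y Uᶜ - ε) 0]
  calc (K : ℝ) * infDist y Uᶜ ≤ K * (2 * max (infDist y Uᶜ - ε) 0) := by gcongr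
    _ = distEnvelope U K ε y := by rw [distEnvelope]; ring

variable [MeasurableSpace E] [BorelSpace E] {ν : Measure E} [ν.IsAddHaarMeasure]
  {U : Set E} {F : E → E} {μ : SignedMeasure E}

theorem HasDivergenceMeasure.integral_fderiv_apply_of_eqOn_frontier
    (hdiv : HasDivergenceMeasure ν U F μ) (hU : IsOpen U) (hUb : Bornology.IsBounded U)
    (hF : IntegrableOn F U ν) {h : E → ℝ} {K : ℝ≥0} (hh : LipschitzWith K h) {C : ℝ}
    (hC : ∀ x, |h x| ≤ C) (h0 : ∀ x ∈ frontier U, h x = 0) :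
    ∫ x in U, fderiv ℝ h x (F x) ∂ν = -sintegralOn μ U h := by
  rcases eq_or_ne U univ with rfl | hUu
  · exact hdiv.integral_fderiv_apply_of_lipschitz hU hF hh
      ((isCompact_of_isClosed_isBounded isClosed_univ hUb).of_isClosed_subset
        (isClosed_tsupport h) (subset_univ _)) (subset_univ _)
  set ε : ℕ → ℝ := fun k => 1 / ((k : ℝ) + 1)
  have hε : Tendsto ε atTop (𝓝 0) := tendsto_one_div_add_atTop_nhds_zero_nat
  set u : ℕ → E → ℝ := fun k => boundaryCutoff U K (ε k) h
  have hsupp (k : ℕ) : tsupport (u k) ⊆ U :=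
    tsupport_boundaryCutoff_subset.trans (setOf_le_infDist_compl_subset (by positivity))
  have hid (k : ℕ) : ∫ x in U, fderiv ℝ (u k) x (F x) ∂ν = -sintegralOn μ U (u k) :=
    hdiv.integral_fderiv_apply_of_lipschitz hU hF (hh.boundaryCutoff U (ε k))
      ((hUb.isCompact_closure.of_isClosed_subset (isClosed_tsupport _)
        ((hsupp k).trans subset_closure))) (hsupp k)
  have hev (x : E) (hx : x ∈ U) : ∀ᶠ k in atTop, u k =ᶠ[𝓝 x] h :=
    hε.eventually (eventually_boundaryCutoff_eventuallyEq hh hU h0 hUu hx)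
  refine tendsto_nhds_unique (f := fun k => ∫ x in U, fderiv ℝ (u k) x (F x) ∂ν)
    (tendsto_integral_clm_apply (fun k => (measurable_fderiv ℝ (u k)).aestronglyMeasurable)
      (fun k x => norm_fderiv_le_of_lipschitz ℝ (hh.boundaryCutoff U (ε k))) hF
      (ae_restrict_of_forall_mem hU.measurableSet fun x hx =>
        tendsto_const_nhds.congr' ((hev x hx).mono fun k hk => hk.fderiv_eq.symm))) ?_
  simp only [hid]
  exact (tendsto_sintegralOn hU.measurableSet
    (fun k => (hh.boundaryCutoff U (ε k)).continuous.measurable)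
    (fun k x => abs_boundaryCutoff_le x |>.trans (hC x))
    fun x hx => tendsto_const_nhds.congr' ((hev x hx).mono fun k hk => hk.eq_of_nhds.symm)).neg

end BoundaryValues

theorem _root_.LipschitzOnWith.exists_lipschitzWith_abs_le {α : Type*} [PseudoMetricSpace α]
    {f : α → ℝ} {s : Set α} {K : ℝ≥0} (hf : LipschitzOnWith K f s) {M : ℝ} (hM0 : 0 ≤ M)
    (hM : ∀ x ∈ s, |f x| ≤ M) : ∃ g : α → ℝ, LipschitzWith K g ∧ EqOn f g s ∧ ∀ x, |g x| ≤ M := by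
  obtain ⟨g, hg, hfg⟩ := hf.extend_real
  refine ⟨fun x => max (-M) (min (g x) M), (hg.min_const M).const_max (-M), fun x hx => ?_,
    fun x => abs_le.2 ⟨le_max_left _ _, max_le (by linarith) (min_le_right _ _)⟩⟩
  dsimp only
  rw [← hfg hx, min_eq_left (abs_le.1 (hM x hx)).2, max_eq_right (abs_le.1 (hM x hx)).1]

section GaussGreen

variable {N : ℕ} {U : Set (EuclideanSpace ℝ (Fin N))}
  {F : EuclideanSpace ℝ (Fin N) → EuclideanSpace ℝ (Fin N)}
  {μ : SignedMeasure (EuclideanSpace ℝ (Fin N))} {g g₁ g₂ : EuclideanSpace ℝ (Fin N) → ℝ}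

lemma lipConstOn_nonneg (Γ : Set (EuclideanSpace ℝ (Fin N))) (g : EuclideanSpace ℝ (Fin N) → ℝ) :
    0 ≤ lipConstOn Γ g :=
  Real.sInf_nonneg fun _ hc => hc.1

lemma _root_.LipschitzOnWith.lipschitzOnWith_lipConstOn {Γ : Set (EuclideanSpace ℝ (Fin N))}
    {c : ℝ≥0} (hg : LipschitzOnWith c g Γ) : LipschitzOnWith (lipConstOn Γ g).toNNReal g Γ := by
  have hne : {c : ℝ | 0 ≤ c ∧ ∀ x ∈ Γ, ∀ y ∈ Γ, |g x - g y| ≤ c * ‖x - y‖}.Nonempty :=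
    ⟨c, c.2, fun x hx y hy => by simpa [Real.dist_eq, dist_eq_norm] using hg.dist_le_mul x hx y hy⟩
  refine LipschitzOnWith.of_dist_le_mul fun x hx y hy => ?_
  rw [Real.dist_eq, dist_eq_norm, Real.coe_toNNReal _ (lipConstOn_nonneg Γ g)]
  rcases eq_or_ne x y with rfl | hxy
  · simp
  have hpos : 0 < ‖x - y‖ := norm_pos_iff.2 (sub_ne_zero.2 hxy)
  rw [← div_le_iff₀ hpos]
  exact le_csInf hne fun c hc => (div_le_iff₀ hpos).2 (hc.2 x hx y hy)

lemma gaussGreen_sub (hF : IntegrableOn F U) {c₁ c₂ : ℝ≥0} (hg₁ : LipschitzWith c₁ g₁)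
    (hg₂ : LipschitzWith c₂ g₂) {C₁ C₂ : ℝ} (hC₁ : ∀ x, |g₁ x| ≤ C₁) (hC₂ : ∀ x, |g₂ x| ≤ C₂) :
    gaussGreen U F μ (fun x => g₁ x - g₂ x) = gaussGreen U F μ g₁ - gaussGreen U F μ g₂ := by
  have hint {g : EuclideanSpace ℝ (Fin N) → ℝ} {c : ℝ≥0} (hg : LipschitzWith c g) :
      IntegrableOn (fun x => fderiv ℝ g x (F x)) U :=
    integrable_clm_apply_of_norm_le (measurable_fderiv ℝ g).aestronglyMeasurable
      (fun _ => norm_fderiv_le_of_lipschitz ℝ hg) hF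
  have hfd : ∀ᵐ x ∂volume.restrict U, fderiv ℝ (fun y => g₁ y - g₂ y) x (F x)
      = fderiv ℝ g₁ x (F x) - fderiv ℝ g₂ x (F x) := by
    refine ae_restrict_of_ae ?_
    filter_upwards [hg₁.ae_differentiableAt, hg₂.ae_differentiableAt] with x h₁ h₂
    rw [fderiv_fun_sub h₁ h₂, sub_apply]
  rw [gaussGreen, integral_congr_ae hfd, integral_sub (hint hg₁) (hint hg₂),
    sintegralOn_sub hg₁.continuous.measurable hg₂.continuous.measurable hC₁ hC₂, gaussGreen,
    gaussGreen]
  ring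

lemma abs_gaussGreen_le (hF : IntegrableOn F U) {K : ℝ≥0} (hg : LipschitzWith K g) {M : ℝ}
    (hM : ∀ x, |g x| ≤ M) :
    |gaussGreen U F μ g| ≤ K * (∫ x in U, ‖F x‖) + M * (μ.totalVariation U).toReal :=
  (abs_add_le _ _).trans (add_le_add
    (abs_integral_clm_apply_le (fun _ => norm_fderiv_le_of_lipschitz ℝ hg) hF)
    (abs_sintegralOn_le hM))

theorem gaussGreen_congr_frontier (hU : IsOpen U) (hUb : Bornology.IsBounded U)
    (hF : IntegrableOn F U) (hdiv : HasDivergenceMeasure volume U F μ) {c₁ c₂ : ℝ≥0}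
    (hg₁ : LipschitzWith c₁ g₁) (hg₂ : LipschitzWith c₂ g₂) {C₁ C₂ : ℝ} (hC₁ : ∀ x, |g₁ x| ≤ C₁)
    (hC₂ : ∀ x, |g₂ x| ≤ C₂) (heq : EqOn g₁ g₂ (frontier U)) :
    gaussGreen U F μ g₁ = gaussGreen U F μ g₂ := by
  have h := hdiv.integral_fderiv_apply_of_eqOn_frontier hU hUb hF (hg₁.sub hg₂) (C := C₁ + C₂)
    (fun x => (abs_sub _ _).trans (add_le_add (hC₁ x) (hC₂ x))) fun x hx => sub_eq_zero.2 (heq hx)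
  have hsub := gaussGreen_sub (μ := μ) hF hg₁ hg₂ hC₁ hC₂
  rw [gaussGreen, h, neg_add_cancel] at hsub
  linarith

theorem abs_gaussGreen_le_frontier (hU : IsOpen U) (hUb : Bornology.IsBounded U)
    (hF : IntegrableOn F U) (hdiv : HasDivergenceMeasure volume U F μ) {c : ℝ≥0}
    (hg : LipschitzWith c g) {C : ℝ} (hC : ∀ x, |g x| ≤ C) :
    |gaussGreen U F μ g| ≤ ((∫ x in U, ‖F x‖) + (μ.totalVariation U).toReal) *
      ((⨆ x : frontier U, |g x|) + lipConstOn (frontier U) g) := by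
  set M := ⨆ x : frontier U, |g x|
  set L := lipConstOn (frontier U) g
  have hM0 : 0 ≤ M := Real.iSup_nonneg fun _ => abs_nonneg _
  have hM (x) (hx : x ∈ frontier U) : |g x| ≤ M :=
    le_ciSup (f := fun x : frontier U => |g x|) ⟨C, by rintro _ ⟨y, rfl⟩; exact hC y⟩ ⟨x, hx⟩
  have hL0 : 0 ≤ L := lipConstOn_nonneg _ _
  have hIF : 0 ≤ ∫ x in U, ‖F x‖ := integral_nonneg fun _ => norm_nonneg _
  have hTV : 0 ≤ (μ.totalVariation U).toReal := ENNReal.toReal_nonneg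
  obtain ⟨g', hg', heq, hg'M⟩ :=
    hg.lipschitzOnWith.lipschitzOnWith_lipConstOn.exists_lipschitzWith_abs_le hM0 hM
  rw [gaussGreen_congr_frontier hU hUb hF hdiv hg hg' hC hg'M heq]
  calc _ ≤ L * (∫ x in U, ‖F x‖) + M * (μ.totalVariation U).toReal := by
        simpa [L, Real.coe_toNNReal _ hL0] using abs_gaussGreen_le (μ := μ) hF hg' hg'M
    _ ≤ _ := by nlinarith [mul_nonneg hM0 hIF, mul_nonneg hL0 hTV]

end GaussGreen

theorem normal_trace_functional_general
    (N : ℕ) (U : Set (EuclideanSpace ℝ (Fin N))) (hUopen : IsOpen U)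
    (hUbdd : Bornology.IsBounded U)
    (F : EuclideanSpace ℝ (Fin N) → EuclideanSpace ℝ (Fin N))
    (hF : IntegrableOn F U)
    (μ : MeasureTheory.SignedMeasure (EuclideanSpace ℝ (Fin N)))
    (hdiv : ∀ φ : EuclideanSpace ℝ (Fin N) → ℝ,
      ContDiff ℝ 1 φ → HasCompactSupport φ → tsupport φ ⊆ U →
      ∫ x in U, fderiv ℝ φ x (F x) = -sintegralOn μ U φ) :
    (∀ g₁ g₂ : EuclideanSpace ℝ (Fin N) → ℝ, ∀ c₁ c₂ : ℝ≥0, ∀ C₁ C₂ : ℝ,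
      LipschitzWith c₁ g₁ → LipschitzWith c₂ g₂ →
      (∀ x, |g₁ x| ≤ C₁) → (∀ x, |g₂ x| ≤ C₂) →
      Set.EqOn g₁ g₂ (frontier U) →
      gaussGreen U F μ g₁ = gaussGreen U F μ g₂) ∧
    (∀ g : EuclideanSpace ℝ (Fin N) → ℝ, ∀ c : ℝ≥0, ∀ C : ℝ,
      LipschitzWith c g → (∀ x, |g x| ≤ C) →
      |gaussGreen U F μ g| ≤
        ((∫ x in U, ‖F x‖) + (μ.totalVariation U).toReal) *
          ((⨆ x : frontier U, |g (x : EuclideanSpace ℝ (Fin N))|) +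
            lipConstOn (frontier U) g)) :=
  ⟨fun _ _ _ _ _ _ hg₁ hg₂ hC₁ hC₂ heq =>
      gaussGreen_congr_frontier hUopen hUbdd hF hdiv hg₁ hg₂ hC₁ hC₂ heq,
    fun _ _ _ hg hC => abs_gaussGreen_le_frontier hUopen hUbdd hF hdiv hg hC⟩

/-- **The normal trace functional depends only on the boundary values.**
Let `U ⊂ ℝ^N` be bounded open and `F ∈ L¹(U;ℝ^N)` a divergence-measure field with
divergence measure `μ`.  For bounded Lipschitz `g` let
`T(g) = ∫_U ∇g·F dx + ∫_U g dμ`.  Then `T(g)` depends only on `g|_{∂U}`, and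
`|T(g)| ≤ (‖F‖_{L¹(U)} + |μ|(U)) (sup_{∂U}|g| + Lip(g|_{∂U}))`. -/
theorem normal_trace_functional
    (N : ℕ) (U : Set (EuclideanSpace ℝ (Fin N))) (hUopen : IsOpen U)
    (hUbdd : Bornology.IsBounded U)
    (F : EuclideanSpace ℝ (Fin N) → EuclideanSpace ℝ (Fin N))
    (hF : IntegrableOn F U)
    (μ : MeasureTheory.SignedMeasure (EuclideanSpace ℝ (Fin N)))
    (hμU : μ = μ.restrict U)
    (hdiv : ∀ φ : EuclideanSpace ℝ (Fin N) → ℝ,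
      ContDiff ℝ 1 φ → HasCompactSupport φ → tsupport φ ⊆ U →
      ∫ x in U, fderiv ℝ φ x (F x) = -sintegralOn μ U φ) :
    (∀ g₁ g₂ : EuclideanSpace ℝ (Fin N) → ℝ, ∀ c₁ c₂ : ℝ≥0, ∀ C₁ C₂ : ℝ,
      LipschitzWith c₁ g₁ → LipschitzWith c₂ g₂ →
      (∀ x, |g₁ x| ≤ C₁) → (∀ x, |g₂ x| ≤ C₂) →
      Set.EqOn g₁ g₂ (frontier U) →
      gaussGreen U F μ g₁ = gaussGreen U F μ g₂) ∧
    (∀ g : EuclideanSpace ℝ (Fin N) → ℝ, ∀ c : ℝ≥0, ∀ C : ℝ,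
      LipschitzWith c g → (∀ x, |g x| ≤ C) →
      |gaussGreen U F μ g| ≤
        ((∫ x in U, ‖F x‖) + (μ.totalVariation U).toReal) *
          ((⨆ x : frontier U, |g (x : EuclideanSpace ℝ (Fin N))|) +
            lipConstOn (frontier U) g)) :=
  normal_trace_functional_general N U hUopen hUbdd F hF μ hdiv

end DMF
end
end

section
/- Let L > 0, m ≥ 1, let a : [−L,L] → ℝ^m be continuous, and let K ⊂ ℝ^m be compact. Assume that for every κ ∈ K the set { ξ ∈ [−L,L] : a(ξ)·κ = 0 } has Lebesgue measure zero. For δ > 0 define h_δ(κ) = Leb{ ξ ∈ [−L,L] : |a(ξ)·κ| ≤ δ }. Then h_{δ₁}(κ) ≤ h_{δ₂}(κ) whenever 0 < δ₁ ≤ δ₂ and κ ∈ K, and sup_{κ∈K} h_δ(κ) → 0 as δ → 0+. -/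
/-!
For fixed `κ`, the sets `{ξ ∈ [-L, L] : |a(ξ)·κ| ≤ δ}` shrink, as `δ → 0+`, to the zero set of
`a(·)·κ`, which is null. Since `a` is bounded on `[-L, L]`, moving `κ` by `r` moves `a(ξ)·κ` by
`O(r)` uniformly in `ξ`; so the set for `κ'` at height `δ` lies in the set for `κ` at height
`δ + O(‖κ' - κ‖)`. This makes the convergence locally uniform in `κ`, and compactness of `K`
makes it uniform on `K`.
-/

open MeasureTheory Filter Topology Set
open scoped ENNReal Matrix

theorem abs_dotProduct_le {ι : Type*} [Fintype ι] (v w : ι → ℝ) :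
    |v ⬝ᵥ w| ≤ Fintype.card ι * (‖v‖ * ‖w‖) :=
  calc |v ⬝ᵥ w| ≤ ∑ i, |v i * w i| := Finset.abs_sum_le_sum_abs _ _
    _ ≤ ∑ _i : ι, ‖v‖ * ‖w‖ := Finset.sum_le_sum fun i _ => by
        rw [abs_mul]
        exact mul_le_mul (norm_le_pi_norm v i) (norm_le_pi_norm w i) (abs_nonneg _) (norm_nonneg _)
    _ = Fintype.card ι * (‖v‖ * ‖w‖) := by simp

theorem tendsto_measure_sep_abs_le_nhdsGT {α : Type*} [TopologicalSpace α] [MeasurableSpace α]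
    [OpensMeasurableSpace α] {μ : Measure α} {s : Set α} {f : α → ℝ} (hs : IsClosed s)
    (hf : ContinuousOn f s) (hμs : μ s ≠ ∞) :
    Tendsto (fun δ => μ {x ∈ s | |f x| ≤ δ}) (𝓝[>] 0) (𝓝 (μ {x ∈ s | f x = 0})) := by
  have hzero : {x ∈ s | f x = 0} = ⋂ δ > (0 : ℝ), {x ∈ s | |f x| ≤ δ} := by
    ext x
    simp only [mem_sep_iff, mem_iInter]
    refine ⟨fun ⟨hx, hfx⟩ δ hδ => ⟨hx, by rw [hfx, abs_zero]; exact hδ.le⟩, fun H => ?_⟩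
    exact ⟨(H 1 one_pos).1, abs_nonpos_iff.1 (le_of_forall_gt_imp_ge_of_dense fun δ hδ => (H δ hδ).2)⟩
  rw [hzero]
  refine tendsto_measure_biInter_gt (fun δ _ => ?_) (fun _ _ _ hδ x hx => ⟨hx.1, hx.2.trans hδ⟩)
    ⟨1, one_pos, measure_ne_top_of_subset (sep_subset _ _) hμs⟩
  exact (hf.abs.preimage_isClosed_of_isClosed hs isClosed_Iic).measurableSet.nullMeasurableSet

theorem tendstoLocallyUniformlyOn_nhdsGT_zero_of_le_add_dist {X : Type*} [PseudoMetricSpace X]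
    {s : Set X} {h : ℝ → X → ℝ} {C : ℝ} (hC : 0 ≤ C) (hh : ∀ δ x, 0 ≤ h δ x)
    (hshift : ∀ δ x y, h δ y ≤ h (δ + C * dist y x) x)
    (hlim : ∀ x ∈ s, Tendsto (h · x) (𝓝[>] 0) (𝓝 0)) :
    TendstoLocallyUniformlyOn h 0 (𝓝[>] 0) s := by
  rw [Metric.tendstoLocallyUniformlyOn_iff]
  intro ε hε x hx
  obtain ⟨u, hu, hux⟩ := mem_nhdsGT_iff_exists_Ioo_subset.1 ((hlim x hx).eventually (gt_mem_nhds hε))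
  have hC1 : 0 < C + 1 := by linarith
  refine ⟨Metric.ball x (u / 2 / (C + 1)),
    mem_nhdsWithin_of_mem_nhds (Metric.ball_mem_nhds _ (div_pos (half_pos hu) hC1)), ?_⟩
  filter_upwards [Ioo_mem_nhdsGT (half_pos hu)] with δ hδ y hy
  have hdist : dist y x * (C + 1) < u / 2 := (lt_div_iff₀ hC1).1 (Metric.mem_ball.1 hy)
  rw [Pi.zero_apply, dist_zero_left, Real.norm_eq_abs, abs_of_nonneg (hh δ y)]
  refine (hshift δ x y).trans_lt (hux ⟨by nlinarith [hδ.1, dist_nonneg (x := y) (y := x)], ?_⟩)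
  nlinarith [hδ.2, dist_nonneg (x := y) (y := x)]

theorem TendstoUniformlyOn.tendsto_iSup_of_nonneg {ι α : Type*} {F : ι → α → ℝ} {p : Filter ι}
    {s : Set α} (hF : TendstoUniformlyOn F 0 p s) (hF0 : ∀ n x, 0 ≤ F n x) :
    Tendsto (fun n => ⨆ x : s, F n x) p (𝓝 0) := by
  rw [Metric.tendstoUniformlyOn_iff] at hF
  refine tendsto_order.2 ⟨fun b hb => Eventually.of_forall fun n =>
    hb.trans_le (Real.iSup_nonneg fun x => hF0 n x), fun b hb => ?_⟩
  filter_upwards [hF (b / 2) (half_pos hb)] with n hn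
  refine (Real.iSup_le (fun x => ?_) (half_pos hb).le).trans_lt (half_lt_self hb)
  have := hn x x.2
  rw [Pi.zero_apply, dist_zero_left, Real.norm_eq_abs, abs_of_nonneg (hF0 n x)] at this
  exact this.le

theorem near_degeneracy_sets_small_general
    (L : ℝ) (m : ℕ)
    (a : ℝ → Fin m → ℝ) (ha : ContinuousOn a (Set.Icc (-L) L))
    (K : Set (Fin m → ℝ)) (hK : IsCompact K)
    (hnd : ∀ κ ∈ K, volume {ξ ∈ Set.Icc (-L) L | ∑ i, a ξ i * κ i = 0} = 0) :
    (∀ δ₁ δ₂ : ℝ, 0 < δ₁ → δ₁ ≤ δ₂ → ∀ κ ∈ K,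
      (volume {ξ ∈ Set.Icc (-L) L | |∑ i, a ξ i * κ i| ≤ δ₁}).toReal ≤
        (volume {ξ ∈ Set.Icc (-L) L | |∑ i, a ξ i * κ i| ≤ δ₂}).toReal) ∧
    Tendsto
      (fun δ : ℝ => ⨆ κ : K,
        (volume {ξ ∈ Set.Icc (-L) L | |∑ i, a ξ i * (κ : Fin m → ℝ) i| ≤ δ}).toReal)
      (nhdsWithin 0 (Set.Ioi 0)) (nhds 0) := by
  set h : ℝ → (Fin m → ℝ) → ℝ := fun δ κ =>
    (volume {ξ ∈ Icc (-L) L | |∑ i, a ξ i * κ i| ≤ δ}).toReal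
  have hsub : ∀ {δ₁ δ₂ κ₁ κ₂}, {ξ ∈ Icc (-L) L | |a ξ ⬝ᵥ κ₁| ≤ δ₁} ⊆
      {ξ ∈ Icc (-L) L | |a ξ ⬝ᵥ κ₂| ≤ δ₂} → h δ₁ κ₁ ≤ h δ₂ κ₂ := fun hs =>
    ENNReal.toReal_mono (measure_ne_top_of_subset (sep_subset _ _) measure_Icc_lt_top.ne)
      (measure_mono hs)
  refine ⟨fun δ₁ δ₂ _ hδ κ _ => hsub fun ξ hξ => ⟨hξ.1, hξ.2.trans hδ⟩, ?_⟩
  obtain ⟨R, hR0, hR⟩ := (isCompact_Icc.image_of_continuousOn ha).isBounded.exists_pos_norm_le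
  have hshift : ∀ δ κ κ', h δ κ' ≤ h (δ + m * R * dist κ' κ) κ := fun δ κ κ' =>
    hsub fun ξ ⟨hξ, hle⟩ => ⟨hξ, calc
      |a ξ ⬝ᵥ κ| ≤ |a ξ ⬝ᵥ κ'| + |a ξ ⬝ᵥ (κ - κ')| := by
          rw [dotProduct_sub]; exact sub_le_iff_le_add'.1 (abs_sub_abs_le_abs_sub _ _)
      _ ≤ δ + m * (R * dist κ' κ) := by
          refine add_le_add hle ((abs_dotProduct_le _ _).trans ?_)
          rw [Fintype.card_fin, ← dist_eq_norm, dist_comm]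
          gcongr
          exact hR _ (mem_image_of_mem a hξ)
      _ = δ + m * R * dist κ' κ := by ring⟩
  have hlim : ∀ κ ∈ K, Tendsto (h · κ) (𝓝[>] 0) (𝓝 0) := by
    intro κ hκ
    have := tendsto_measure_sep_abs_le_nhdsGT (μ := volume) isClosed_Icc
      (f := fun ξ => ∑ i, a ξ i * κ i) (by fun_prop) measure_Icc_lt_top.ne
    rw [hnd κ hκ] at this
    exact (ENNReal.tendsto_toReal ENNReal.zero_ne_top).comp this
  exact ((tendstoLocallyUniformlyOn_iff_tendstoUniformlyOn_of_compact hK).1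
    (tendstoLocallyUniformlyOn_nhdsGT_zero_of_le_add_dist (by positivity)
      (fun _ _ => ENNReal.toReal_nonneg) hshift hlim)).tendsto_iSup_of_nonneg
    fun _ _ => ENNReal.toReal_nonneg

/-- **Uniform smallness of the near-degeneracy sets.**
Let `a : [−L,L] → ℝ^m` be continuous and `K ⊂ ℝ^m` compact.  Assume that for every
`κ ∈ K` the set `{ξ ∈ [−L,L] : a(ξ)·κ = 0}` has Lebesgue measure zero.  For `δ > 0` set
`h_δ(κ) = Leb{ξ ∈ [−L,L] : |a(ξ)·κ| ≤ δ}`.  Then `h_δ` is monotone in `δ` on `K` and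
`sup_{κ∈K} h_δ(κ) → 0` as `δ → 0+`. -/
theorem near_degeneracy_sets_small
    (L : ℝ) (hL : 0 < L) (m : ℕ) (hm : 1 ≤ m)
    (a : ℝ → Fin m → ℝ) (ha : ContinuousOn a (Set.Icc (-L) L))
    (K : Set (Fin m → ℝ)) (hK : IsCompact K)
    (hnd : ∀ κ ∈ K, volume {ξ ∈ Set.Icc (-L) L | ∑ i, a ξ i * κ i = 0} = 0) :
    (∀ δ₁ δ₂ : ℝ, 0 < δ₁ → δ₁ ≤ δ₂ → ∀ κ ∈ K,
      (volume {ξ ∈ Set.Icc (-L) L | |∑ i, a ξ i * κ i| ≤ δ₁}).toReal ≤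
        (volume {ξ ∈ Set.Icc (-L) L | |∑ i, a ξ i * κ i| ≤ δ₂}).toReal) ∧
    Tendsto
      (fun δ : ℝ => ⨆ κ : K,
        (volume {ξ ∈ Set.Icc (-L) L | |∑ i, a ξ i * (κ : Fin m → ℝ) i| ≤ δ}).toReal)
      (nhdsWithin 0 (Set.Ioi 0)) (nhds 0) :=
  near_degeneracy_sets_small_general L m a ha K hK hnd
end

section
/- Let d = d' + d'' with d', d'' ≥ 1, write n = (n', n'') ∈ ℝ^{d'} × ℝ^{d''} for vectors in ℝ^d, and let ℓ > 0. Let a : ℝ → ℝ^d and b : ℝ → ℝ^{d''×d''} be continuous, with b(ξ) symmetric positive semidefinite for every ξ. Let E ⊂ ℝ be compact and set |𝓛(iτ, in, ξ)| = ( |τ + a(ξ)·n|² + (n''ᵀ b(ξ) n'')² )^{1/2}. Assume there exist α ∈ (0,1), β > 0, C > 0 and J₀ ≥ 1 such that for every δ > 0, every τ ∈ ℝ and every n ∈ ℓℤ^d with |n| ≥ J₀, Leb{ ξ ∈ E : |𝓛(iτ, in, ξ)| ≤ δ } ≤ C (δ / |n|^β)^α. Then for every (τ, κ) ∈ ℝ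 × ℝ^d with τ² + |κ|² = 1, the set { ξ ∈ E : τ + a(ξ)·κ = 0 and κ''ᵀ b(ξ) κ'' = 0 } has Lebesgue measure zero. -/
/-!
Fix `(τ, κ)` on the unit sphere and a point `ξ` of the degenerate set `Z`. Since `b(ξ)` is
positive semidefinite, `κ''ᵀ b(ξ) κ'' = 0` forces `b(ξ) κ'' = 0`, so both the linear part
`N τ + a(ξ)·n` and the quadratic part `n''ᵀ b(ξ) n''` of the symbol only see the error
`n - N κ` when `n` is a lattice point next to `N κ`. That error is at most `ℓ / 2` in each
coordinate, so on the part of `Z` where `a(ξ)` and `b(ξ)` are bounded by a fixed constant, the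
symbol at `(N τ, n)` is bounded by a fixed `δ`, independent of `N`. The quantitative condition
then bounds the measure of this part by `C (δ / |n|^β)^α`, which tends to `0` as `N → ∞`
because `|n| → ∞` when `κ ≠ 0`; countably many such parts exhaust `Z`. When `κ = 0`, `τ = ±1`
and `Z` is empty.
-/

open MeasureTheory Filter Matrix

section QuadraticForm

variable {ι : Type*} [Fintype ι]

theorem sum_sum_mul_mul_eq_dotProduct_mulVec (A : Matrix ι ι ℝ) (x y : ι → ℝ) :
    ∑ i, ∑ j, x i * A i j * y j = x ⬝ᵥ A *ᵥ y := by
  simp only [dotProduct, mulVec, Finset.mul_sum, mul_assoc]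

theorem Matrix.PosSemidef.dotProduct_mulVec_sub_smul {A : Matrix ι ι ℝ} (hA : A.PosSemidef)
    {x : ι → ℝ} (hx : x ⬝ᵥ A *ᵥ x = 0) (y : ι → ℝ) (t : ℝ) :
    (y - t • x) ⬝ᵥ A *ᵥ (y - t • x) = y ⬝ᵥ A *ᵥ y := by
  have hAx : A *ᵥ x = 0 := (hA.dotProduct_mulVec_zero_iff x).mp hx
  have hxA : x ᵥ* A = 0 := by
    rw [← mulVec_transpose, ← conjTranspose_eq_transpose_of_trivial, hA.isHermitian.eq, hAx]
  rw [mulVec_sub, mulVec_smul, hAx, smul_zero, sub_zero, sub_dotProduct, smul_dotProduct,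
    dotProduct_mulVec x, hxA, zero_dotProduct, smul_zero, sub_zero]

theorem abs_dotProduct_le_s7 {a e : ι → ℝ} {ε : ℝ} (he : ∀ j, |e j| ≤ ε) :
    |a ⬝ᵥ e| ≤ ε * ∑ j, |a j| := by
  calc |a ⬝ᵥ e| ≤ ∑ j, |a j| * |e j| := by
        simpa only [dotProduct, abs_mul] using Finset.abs_sum_le_sum_abs (fun j => a j * e j) _
    _ ≤ ∑ j, |a j| * ε := by gcongr with j; exact he j
    _ = ε * ∑ j, |a j| := by rw [← Finset.sum_mul, mul_comm]

theorem abs_sum_sum_mul_mul_le {A : Matrix ι ι ℝ} {e : ι → ℝ} {ε : ℝ}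
    (he : ∀ j, |e j| ≤ ε) :
    |∑ i, ∑ j, e i * A i j * e j| ≤ ε ^ 2 * ∑ i, ∑ j, |A i j| := by
  calc |∑ i, ∑ j, e i * A i j * e j| ≤ ∑ i, ∑ j, |e i| * |e j| * |A i j| := by
        refine (Finset.abs_sum_le_sum_abs _ _).trans (Finset.sum_le_sum fun i _ => ?_)
        refine (Finset.abs_sum_le_sum_abs _ _).trans_eq (Finset.sum_congr rfl fun j _ => ?_)
        rw [abs_mul, abs_mul]; ring
    _ ≤ ∑ i, ∑ j, ε ^ 2 * |A i j| := by
        gcongr with i _ j _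
        rw [sq]
        exact mul_le_mul (he i) (he j) (abs_nonneg _) ((abs_nonneg _).trans (he i))
    _ = ε ^ 2 * ∑ i, ∑ j, |A i j| := by simp only [Finset.mul_sum]

end QuadraticForm

theorem symbol_le_of_near_multiple_of_zero {ι₁ ι₂ : Type*} [Fintype ι₁] [Fintype ι₂]
    {a' : ι₁ → ℝ} {a'' : ι₂ → ℝ} {B : Matrix ι₂ ι₂ ℝ} (hB : B.PosSemidef)
    {τ t ε : ℝ} {κ' n' : ι₁ → ℝ} {κ'' n'' : ι₂ → ℝ}
    (hlin : τ + (a' ⬝ᵥ κ' + a'' ⬝ᵥ κ'') = 0)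
    (hquad : ∑ i, ∑ j, κ'' i * B i j * κ'' j = 0)
    (hn' : ∀ j, |n' j - t * κ' j| ≤ ε) (hn'' : ∀ j, |n'' j - t * κ'' j| ≤ ε) :
    √((t * τ + (a' ⬝ᵥ n' + a'' ⬝ᵥ n'')) ^ 2 + (∑ i, ∑ j, n'' i * B i j * n'' j) ^ 2)
      ≤ ε * (∑ j, |a' j| + ∑ j, |a'' j|) + ε ^ 2 * ∑ i, ∑ j, |B i j| := by
  set L := t * τ + (a' ⬝ᵥ n' + a'' ⬝ᵥ n'')
  set Q := ∑ i, ∑ j, n'' i * B i j * n'' j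
  have hL : L = a' ⬝ᵥ (n' - t • κ') + a'' ⬝ᵥ (n'' - t • κ'') := by
    simp only [L, dotProduct_sub, dotProduct_smul, smul_eq_mul]
    linear_combination t * hlin
  have hQ : Q = ∑ i, ∑ j, (n'' - t • κ'') i * B i j * (n'' - t • κ'') j := by
    rw [sum_sum_mul_mul_eq_dotProduct_mulVec] at hquad ⊢
    rw [hB.dotProduct_mulVec_sub_smul hquad, ← sum_sum_mul_mul_eq_dotProduct_mulVec]
  have hLε : |L| ≤ ε * (∑ j, |a' j| + ∑ j, |a'' j|) := by
    rw [hL, mul_add]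
    exact (abs_add_le _ _).trans (add_le_add (abs_dotProduct_le_s7 hn') (abs_dotProduct_le_s7 hn''))
  have hQε : |Q| ≤ ε ^ 2 * ∑ i, ∑ j, |B i j| := hQ ▸ abs_sum_sum_mul_mul_le hn''
  have hLQ : √(L ^ 2 + Q ^ 2) ≤ |L| + |Q| := by
    rw [Real.sqrt_le_iff]
    constructor
    · positivity
    · nlinarith [sq_abs L, sq_abs Q, abs_nonneg L, abs_nonneg Q]
  linarith

noncomputable def roundToLattice (ℓ x : ℝ) : ℝ := ℓ * round (x / ℓ)

theorem abs_roundToLattice_sub_le {ℓ : ℝ} (hℓ : 0 < ℓ) (x : ℝ) :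
    |roundToLattice ℓ x - x| ≤ ℓ / 2 := by
  have h : roundToLattice ℓ x - x = -(ℓ * (x / ℓ - round (x / ℓ))) := by
    rw [roundToLattice]; field_simp; ring
  rw [h, abs_neg, abs_mul, abs_of_pos hℓ]
  nlinarith [abs_sub_round (x / ℓ)]

theorem tendsto_abs_roundToLattice_natCast_mul_atTop {ℓ κ : ℝ} (hℓ : 0 < ℓ)
    (hκ : κ ≠ 0) :
    Tendsto (fun N : ℕ => |roundToLattice ℓ (N * κ)|) atTop atTop := by
  refine tendsto_atTop_mono (fun N => ?_)
    (tendsto_atTop_add_const_right _ (-(ℓ / 2))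
      (tendsto_natCast_atTop_atTop.atTop_mul_const (abs_pos.mpr hκ)))
  have h := abs_sub_abs_le_abs_sub ((N : ℝ) * κ) (roundToLattice ℓ (N * κ))
  rw [abs_sub_comm, abs_mul, Nat.abs_cast] at h
  linarith [abs_roundToLattice_sub_le hℓ ((N : ℝ) * κ)]

theorem tendsto_sqrt_sum_sq_add_sum_sq_atTop {ι₁ ι₂ γ : Type*} [Fintype ι₁] [Fintype ι₂]
    {l : Filter γ} {u : γ → ι₁ → ℝ} {v : γ → ι₂ → ℝ}
    (h : (∃ j, Tendsto (fun N => |u N j|) l atTop) ∨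
      ∃ j, Tendsto (fun N => |v N j|) l atTop) :
    Tendsto (fun N => √(∑ j, u N j ^ 2 + ∑ j, v N j ^ 2)) l atTop := by
  have hu : ∀ N, 0 ≤ ∑ j, u N j ^ 2 := fun N => Finset.sum_nonneg fun j _ => sq_nonneg _
  have hv : ∀ N, 0 ≤ ∑ j, v N j ^ 2 := fun N => Finset.sum_nonneg fun j _ => sq_nonneg _
  rcases h with ⟨j, hj⟩ | ⟨j, hj⟩
  · refine tendsto_atTop_mono (fun N => Real.abs_le_sqrt ?_) hj
    linarith [hv N, Finset.single_le_sum (fun j _ => sq_nonneg (u N j)) (Finset.mem_univ j)]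
  · refine tendsto_atTop_mono (fun N => Real.abs_le_sqrt ?_) hj
    linarith [hu N, Finset.single_le_sum (fun j _ => sq_nonneg (v N j)) (Finset.mem_univ j)]

section MeasureZero

variable {X : Type*} [MeasurableSpace X] {μ : Measure X} {s : Set X}

theorem measure_eq_zero_of_le_ofReal_rpow {γ : Type*} {l : Filter γ} [l.NeBot] {r : γ → ℝ}
    (hr : Tendsto r l atTop) {p q C δ J₀ : ℝ} (hp : 0 < p) (hq : 0 < q)
    (h : ∀ N, J₀ ≤ r N → μ s ≤ ENNReal.ofReal (C * (δ / r N ^ q) ^ p)) : μ s = 0 := by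
  have hbound : Tendsto (fun N => C * (δ / r N ^ q) ^ p) l (nhds 0) := by
    have h0 : Tendsto (fun N => δ / r N ^ q) l (nhds 0) :=
      tendsto_const_nhds.div_atTop ((tendsto_rpow_atTop hq).comp hr)
    simpa [Real.zero_rpow hp.ne'] using
      ((Real.continuousAt_rpow_const 0 p (Or.inr hp.le)).tendsto.comp h0).const_mul C
  refine le_antisymm (ge_of_tendsto (by simpa using ENNReal.tendsto_ofReal hbound) ?_) zero_le
  exact (hr.eventually_ge_atTop J₀).mono h

theorem measure_eq_zero_of_forall_sublevel (g : X → ℝ)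
    (h : ∀ k : ℕ, μ {x ∈ s | g x ≤ k} = 0) : μ s = 0 :=
  measure_mono_null (fun x hx => Set.mem_iUnion.2 ⟨⌈g x⌉₊, Set.mem_sep hx (Nat.le_ceil (g x))⟩)
    (measure_iUnion_null h)

end MeasureZero

theorem nondegeneracy_of_quantitative_general
    (d' d'' : ℕ) (ℓ : ℝ) (hℓ : 0 < ℓ)
    (a' : ℝ → Fin d' → ℝ) (a'' : ℝ → Fin d'' → ℝ)
    (b : ℝ → Matrix (Fin d'') (Fin d'') ℝ)
    (hbpsd : ∀ ξ : ℝ, (b ξ).PosSemidef)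
    (E : Set ℝ)
    (α β C J₀ : ℝ) (hα : α ∈ Set.Ioo (0 : ℝ) 1) (hβ : 0 < β)
    (hmain : ∀ δ : ℝ, 0 < δ → ∀ τ : ℝ, ∀ n' : Fin d' → ℝ, ∀ n'' : Fin d'' → ℝ,
      (∃ z' : Fin d' → ℤ, ∀ j, n' j = ℓ * (z' j : ℝ)) →
      (∃ z'' : Fin d'' → ℤ, ∀ j, n'' j = ℓ * (z'' j : ℝ)) →
      J₀ ≤ Real.sqrt (∑ j, n' j ^ 2 + ∑ j, n'' j ^ 2) →
      volume {ξ ∈ E |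
          Real.sqrt ((τ + ((∑ j, a' ξ j * n' j) + ∑ j, a'' ξ j * n'' j)) ^ 2 +
            (∑ i, ∑ j, n'' i * b ξ i j * n'' j) ^ 2) ≤ δ} ≤
        ENNReal.ofReal (C * (δ / Real.sqrt (∑ j, n' j ^ 2 + ∑ j, n'' j ^ 2) ^ β) ^ α)) :
    ∀ τ : ℝ, ∀ κ' : Fin d' → ℝ, ∀ κ'' : Fin d'' → ℝ,
      τ ^ 2 + ((∑ j, κ' j ^ 2) + ∑ j, κ'' j ^ 2) = 1 →
      volume {ξ ∈ E |
        τ + ((∑ j, a' ξ j * κ' j) + ∑ j, a'' ξ j * κ'' j) = 0 ∧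
        (∑ i, ∑ j, κ'' i * b ξ i j * κ'' j) = 0} = 0 := by
  intro τ κ' κ'' hnorm
  by_cases hκ : (∃ j, κ' j ≠ 0) ∨ ∃ j, κ'' j ≠ 0
  swap
  · simp only [not_or, not_exists, not_not] at hκ
    have hτ : τ ≠ 0 := by rintro rfl; simp [hκ.1, hκ.2] at hnorm
    exact measure_mono_null (fun ξ hξ => hτ (by simpa [hκ.1, hκ.2] using hξ.2.1))
      measure_empty
  set n' : ℕ → Fin d' → ℝ := fun N j => roundToLattice ℓ (N * κ' j)
  set n'' : ℕ → Fin d'' → ℝ := fun N j => roundToLattice ℓ (N * κ'' j)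
  have hr : Tendsto (fun N => √(∑ j, n' N j ^ 2 + ∑ j, n'' N j ^ 2)) atTop atTop :=
    tendsto_sqrt_sum_sq_add_sum_sq_atTop <| hκ.imp
      (fun ⟨j, hj⟩ => ⟨j, tendsto_abs_roundToLattice_natCast_mul_atTop hℓ hj⟩)
      (fun ⟨j, hj⟩ => ⟨j, tendsto_abs_roundToLattice_natCast_mul_atTop hℓ hj⟩)
  refine measure_eq_zero_of_forall_sublevel
    (fun ξ => ℓ / 2 * (∑ j, |a' ξ j| + ∑ j, |a'' ξ j|) + (ℓ / 2) ^ 2 * ∑ i, ∑ j, |b ξ i j|)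
    fun k => ?_
  refine measure_eq_zero_of_le_ofReal_rpow hr hα.1 hβ (C := C) (δ := k + 1) (J₀ := J₀)
    fun N hN => ?_
  refine (measure_mono ?_).trans (hmain (k + 1) (by positivity) (N * τ) (n' N) (n'' N)
    ⟨_, fun j => rfl⟩ ⟨_, fun j => rfl⟩ hN)
  rintro ξ ⟨⟨hξE, hlin, hquad⟩, hk⟩
  have hsymbol := symbol_le_of_near_multiple_of_zero (hbpsd ξ) (t := N) hlin hquad
    (fun j => abs_roundToLattice_sub_le hℓ _) (fun j => abs_roundToLattice_sub_le hℓ _)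
  exact ⟨hξE, hsymbol.trans (hk.trans (by linarith))⟩

/-- **The quantitative nondegeneracy condition implies the qualitative one.**
Write `n = (n', n'') ∈ ℝ^{d'} × ℝ^{d''}`.  Let `a = (a', a'')` and `b` be continuous,
with `b(ξ)` symmetric positive semidefinite, `E ⊂ ℝ` compact, and set
`|𝓛(iτ,in,ξ)| = (|τ + a(ξ)·n|² + (n''ᵀ b(ξ) n'')²)^{1/2}`.  If there are `α ∈ (0,1)`,
`β > 0`, `C > 0`, `J₀ ≥ 1` such that for all `δ > 0`, `τ ∈ ℝ` and lattice points
`n ∈ ℓℤ^d` with `|n| ≥ J₀` one has `Leb{ξ ∈ E : |𝓛(iτ,in,ξ)| ≤ δ} ≤ C(δ/|n|^β)^α`,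
then for every `(τ,κ)` with `τ² + |κ|² = 1` the set
`{ξ ∈ E : τ + a(ξ)·κ = 0 ∧ κ''ᵀ b(ξ) κ'' = 0}` is Lebesgue null. -/
theorem nondegeneracy_of_quantitative
    (d' d'' : ℕ) (hd' : 1 ≤ d') (hd'' : 1 ≤ d'') (ℓ : ℝ) (hℓ : 0 < ℓ)
    (a' : ℝ → Fin d' → ℝ) (a'' : ℝ → Fin d'' → ℝ)
    (b : ℝ → Matrix (Fin d'') (Fin d'') ℝ)
    (ha' : ∀ j, Continuous fun ξ => a' ξ j)
    (ha'' : ∀ j, Continuous fun ξ => a'' ξ j)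
    (hb : ∀ i j, Continuous fun ξ => b ξ i j)
    (hbpsd : ∀ ξ : ℝ, (b ξ).PosSemidef)
    (E : Set ℝ) (hE : IsCompact E)
    (α β C J₀ : ℝ) (hα : α ∈ Set.Ioo (0 : ℝ) 1) (hβ : 0 < β) (hC : 0 < C) (hJ₀ : 1 ≤ J₀)
    (hmain : ∀ δ : ℝ, 0 < δ → ∀ τ : ℝ, ∀ n' : Fin d' → ℝ, ∀ n'' : Fin d'' → ℝ,
      (∃ z' : Fin d' → ℤ, ∀ j, n' j = ℓ * (z' j : ℝ)) →
      (∃ z'' : Fin d'' → ℤ, ∀ j, n'' j = ℓ * (z'' j : ℝ)) →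
      J₀ ≤ Real.sqrt (∑ j, n' j ^ 2 + ∑ j, n'' j ^ 2) →
      volume {ξ ∈ E |
          Real.sqrt ((τ + ((∑ j, a' ξ j * n' j) + ∑ j, a'' ξ j * n'' j)) ^ 2 +
            (∑ i, ∑ j, n'' i * b ξ i j * n'' j) ^ 2) ≤ δ} ≤
        ENNReal.ofReal (C * (δ / Real.sqrt (∑ j, n' j ^ 2 + ∑ j, n'' j ^ 2) ^ β) ^ α)) :
    ∀ τ : ℝ, ∀ κ' : Fin d' → ℝ, ∀ κ'' : Fin d'' → ℝ,
      τ ^ 2 + ((∑ j, κ' j ^ 2) + ∑ j, κ'' j ^ 2) = 1 →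
      volume {ξ ∈ E |
        τ + ((∑ j, a' ξ j * κ' j) + ∑ j, a'' ξ j * κ'' j) = 0 ∧
        (∑ i, ∑ j, κ'' i * b ξ i j * κ'' j) = 0} = 0 :=
  nondegeneracy_of_quantitative_general d' d'' ℓ hℓ a' a'' b hbpsd E α β C J₀ hα hβ hmain
end

section
/- Let d = d' + d'' with d', d'' ≥ 1 and write κ = (κ', κ'') ∈ ℝ^{d'} × ℝ^{d''}. Let E ⊂ ℝ be measurable, let a = (a', a'') : ℝ → ℝ^{d'} × ℝ^{d''} be measurable, let b : ℝ → ℝ^{d''×d''} be measurable with b(ξ) symmetric for every ξ, and let θ : ℝ → ℝ be measurable with θ(ξ) > 0 for almost every ξ and θ(ξ)² |ζ|² ≤ ζᵀ b(ξ) ζ for almost every ξ ∈ ℝ and all ζ ∈ ℝ^{d''}. If for every (τ, κ) ∈ ℝ × ℝ^d with τ² + |κ|² = 1 the set { ξ ∈ E : |τ + a(ξ)·κ|² + (κ''ᵀ b(ξ) κ'')² = 0 } has Lebesgue measure zero, then for every such (τ, κ) the set { ξ ∈ E : |τ + a'(ξ)·κ'|² + (κ''ᵀ b(ξ) κ'')²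 = 0 } also has Lebesgue measure zero. -/
open MeasureTheory

/-! When `κ'' = 0` the two sets coincide. Otherwise the coercivity `θ² |κ''|² ≤ κ''ᵀ b κ''`
with `θ > 0` a.e. makes the second summand nonzero almost everywhere, so the set is null. -/

lemma sum_sq_pos_of_ne_zero {ι : Type*} [Fintype ι] {ζ : ι → ℝ} (hζ : ζ ≠ 0) :
    0 < ∑ j, ζ j ^ 2 := by
  obtain ⟨j, hj⟩ := Function.ne_iff.mp hζ
  exact Finset.sum_pos' (fun i _ => sq_nonneg _) ⟨j, Finset.mem_univ j, sq_pos_of_ne_zero hj⟩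

lemma ae_quadForm_pos_of_coercive {α ι : Type*} [MeasurableSpace α] [Fintype ι] {μ : Measure α}
    {b : α → Matrix ι ι ℝ} {θ : α → ℝ} (hθpos : ∀ᵐ ξ ∂μ, 0 < θ ξ)
    (hlower : ∀ᵐ ξ ∂μ, ∀ ζ : ι → ℝ, θ ξ ^ 2 * ∑ j, ζ j ^ 2 ≤ ∑ i, ∑ j, ζ i * b ξ i j * ζ j)
    {ζ : ι → ℝ} (hζ : ζ ≠ 0) :
    ∀ᵐ ξ ∂μ, 0 < ∑ i, ∑ j, ζ i * b ξ i j * ζ j := by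
  filter_upwards [hθpos, hlower] with ξ hθξ hlξ
  exact lt_of_lt_of_le (by have := sum_sq_pos_of_ne_zero hζ; positivity) (hlξ ζ)

lemma measure_sq_add_sq_eq_zero_of_ae_ne_zero {α : Type*} [MeasurableSpace α] {μ : Measure α}
    (E : Set α) (f : α → ℝ) {g : α → ℝ} (hg : ∀ᵐ ξ ∂μ, g ξ ≠ 0) :
    μ {ξ ∈ E | f ξ ^ 2 + g ξ ^ 2 = 0} = 0 := by
  rw [measure_eq_zero_iff_ae_notMem]
  filter_upwards [hg] with ξ hξ
  rintro ⟨-, h⟩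
  have hg0 : g ξ ^ 2 = 0 := ((add_eq_zero_iff_of_nonneg (sq_nonneg _) (sq_nonneg _)).mp h).2
  exact hξ (pow_eq_zero_iff two_ne_zero |>.mp hg0)

theorem nondegeneracy_reduction_general
    (d' d'' : ℕ)
    (E : Set ℝ)
    (a' : ℝ → Fin d' → ℝ) (a'' : ℝ → Fin d'' → ℝ)
    (b : ℝ → Matrix (Fin d'') (Fin d'') ℝ) (θ : ℝ → ℝ)
    (hθpos : ∀ᵐ ξ : ℝ, 0 < θ ξ)
    (hlower : ∀ᵐ ξ : ℝ, ∀ ζ : Fin d'' → ℝ,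
      θ ξ ^ 2 * ∑ j, ζ j ^ 2 ≤ ∑ i, ∑ j, ζ i * b ξ i j * ζ j)
    (hyp : ∀ τ : ℝ, ∀ κ' : Fin d' → ℝ, ∀ κ'' : Fin d'' → ℝ,
      τ ^ 2 + ((∑ j, κ' j ^ 2) + ∑ j, κ'' j ^ 2) = 1 →
      volume {ξ ∈ E |
        (τ + ((∑ j, a' ξ j * κ' j) + ∑ j, a'' ξ j * κ'' j)) ^ 2 +
          (∑ i, ∑ j, κ'' i * b ξ i j * κ'' j) ^ 2 = 0} = 0) :
    ∀ τ : ℝ, ∀ κ' : Fin d' → ℝ, ∀ κ'' : Fin d'' → ℝ,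
      τ ^ 2 + ((∑ j, κ' j ^ 2) + ∑ j, κ'' j ^ 2) = 1 →
      volume {ξ ∈ E |
        (τ + ∑ j, a' ξ j * κ' j) ^ 2 +
          (∑ i, ∑ j, κ'' i * b ξ i j * κ'' j) ^ 2 = 0} = 0 := by
  intro τ κ' κ'' hunit
  rcases eq_or_ne κ'' 0 with rfl | hκ''
  · simpa using hyp τ κ' 0 (by simpa using hunit)
  · exact measure_sq_add_sq_eq_zero_of_ae_ne_zero E _
      ((ae_quadForm_pos_of_coercive hθpos hlower hκ'').mono fun _ h => h.ne')

/-- **Reduction of the nondegeneracy condition to the hyperbolic variables.**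
Write `κ = (κ', κ'') ∈ ℝ^{d'} × ℝ^{d''}` and `a = (a', a'')`.  Let `b(ξ)` be symmetric
with `θ(ξ)²|ζ|² ≤ ζᵀ b(ξ) ζ` for a.e. `ξ` and all `ζ`, where `θ > 0` a.e.  If for every
unit vector `(τ,κ)` the set `{ξ ∈ E : |τ + a(ξ)·κ|² + (κ''ᵀ b(ξ) κ'')² = 0}` is
Lebesgue null, then so is `{ξ ∈ E : |τ + a'(ξ)·κ'|² + (κ''ᵀ b(ξ) κ'')² = 0}` for every
unit vector `(τ,κ)`. -/
theorem nondegeneracy_reduction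
    (d' d'' : ℕ) (hd' : 1 ≤ d') (hd'' : 1 ≤ d'')
    (E : Set ℝ) (hE : MeasurableSet E)
    (a' : ℝ → Fin d' → ℝ) (a'' : ℝ → Fin d'' → ℝ)
    (b : ℝ → Matrix (Fin d'') (Fin d'') ℝ) (θ : ℝ → ℝ)
    (ha' : ∀ j, Measurable fun ξ => a' ξ j)
    (ha'' : ∀ j, Measurable fun ξ => a'' ξ j)
    (hb : ∀ i j, Measurable fun ξ => b ξ i j)
    (hθ : Measurable θ)
    (hbsymm : ∀ ξ : ℝ, (b ξ).IsSymm)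
    (hθpos : ∀ᵐ ξ : ℝ, 0 < θ ξ)
    (hlower : ∀ᵐ ξ : ℝ, ∀ ζ : Fin d'' → ℝ,
      θ ξ ^ 2 * ∑ j, ζ j ^ 2 ≤ ∑ i, ∑ j, ζ i * b ξ i j * ζ j)
    (hyp : ∀ τ : ℝ, ∀ κ' : Fin d' → ℝ, ∀ κ'' : Fin d'' → ℝ,
      τ ^ 2 + ((∑ j, κ' j ^ 2) + ∑ j, κ'' j ^ 2) = 1 →
      volume {ξ ∈ E |
        (τ + ((∑ j, a' ξ j * κ' j) + ∑ j, a'' ξ j * κ'' j)) ^ 2 +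
          (∑ i, ∑ j, κ'' i * b ξ i j * κ'' j) ^ 2 = 0} = 0) :
    ∀ τ : ℝ, ∀ κ' : Fin d' → ℝ, ∀ κ'' : Fin d'' → ℝ,
      τ ^ 2 + ((∑ j, κ' j ^ 2) + ∑ j, κ'' j ^ 2) = 1 →
      volume {ξ ∈ E |
        (τ + ∑ j, a' ξ j * κ' j) ^ 2 +
          (∑ i, ∑ j, κ'' i * b ξ i j * κ'' j) ^ 2 = 0} = 0 :=
  nondegeneracy_reduction_general d' d'' E a' a'' b θ hθpos hlower hyp
end

section
/- Let b ∈ C¹(ℝ) with b'(u) > 0 for almost every u ∈ ℝ, let d'' ≥ 1, and let b_{ij} : ℝ → ℝ (1 ≤ i, j ≤ d'') be continuous functions such that for every u the matrix (b_{ij}(u)) is symmetric, and such that for some constant Λ ≥ 1, for almost every u ∈ ℝ and all ξ ∈ ℝ^{d''}, b'(u)² |ξ|² ≤ Σ_{i,j} b_{ij}(u) ξ_i ξ_j ≤ Λ b'(u)² |ξ|². Define B_{ij}(u) = ∫_0^u b_{ij}(ζ) dζ. Then b is strictly increasing on ℝ, and for each pair i, j there exists a locally Lipschitz function B̃_{ij}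 : b(ℝ) → ℝ such that B_{ij}(u) = B̃_{ij}(b(u)) for every u ∈ ℝ. -/
/-!
Since `b'` is continuous and positive almost everywhere, `b(v) - b(u) = ∫_u^v b' > 0` for
`u < v`, so `b` is strictly increasing and `B̃_{ij} := B_{ij} ∘ b⁻¹` is well defined on the
range of `b`. Testing the quadratic-form bounds on `e_i ± e_j` gives `|b_{ij}| ≤ Λ b'²`, and on
a compact interval `[p, q]` where `b' ≤ M` this is `|b_{ij}| ≤ Λ M b'`. Hence
`|B_{ij}(v) - B_{ij}(u)| ≤ Λ M |b(v) - b(u)|` for `u, v ∈ [p, q]`, which is the Lipschitz bound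
for `B̃_{ij}` on `[b(p), b(q)]`.
-/

open MeasureTheory NNReal Set

theorem ContDiff.strictMono_of_ae_deriv_pos {b : ℝ → ℝ} (hb : ContDiff ℝ 1 b)
    (hpos : ∀ᵐ u, 0 < deriv b u) : StrictMono b := by
  intro x y hxy
  have hcont : Continuous (deriv b) := hb.continuous_deriv le_rfl
  have hsupp : volume {u | ¬ 0 < deriv b u} = 0 := hpos
  have hint : 0 < ∫ u in x..y, deriv b u := by
    rw [intervalIntegral.integral_pos_iff_support_of_nonneg_ae
      (hpos.mono fun _ hu => hu.le) (hcont.intervalIntegrable x y)]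
    refine ⟨hxy, ?_⟩
    rw [inter_comm, measure_inter_conull (measure_mono_null (fun u hu => ?_) hsupp)]
    · simpa using hxy
    · simp [Function.notMem_support.1 hu]
  rwa [intervalIntegral.integral_deriv_eq_sub (fun u _ => hb.differentiable one_ne_zero u)
    (hcont.intervalIntegrable x y), sub_pos] at hint

theorem abs_entry_le_of_quadForm_le {ι : Type*} [Fintype ι] [DecidableEq ι]
    {A : Matrix ι ι ℝ} (hA : A.IsSymm) {C : ℝ}
    (h : ∀ ξ : ι → ℝ, 0 ≤ ∑ i, ∑ j, ξ i * A i j * ξ j ∧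
      ∑ i, ∑ j, ξ i * A i j * ξ j ≤ C * ∑ j, ξ j ^ 2) (i j : ι) :
    |A i j| ≤ C := by
  have hdiag (k : ι) : 0 ≤ A k k ∧ A k k ≤ C := by
    simpa [Pi.single_apply, ite_mul, mul_ite] using h (Pi.single k 1)
  rcases eq_or_ne i j with rfl | hij
  · exact abs_le.2 ⟨by linarith [hdiag i], (hdiag i).2⟩
  have hpair (e : ℝ) : 0 ≤ A i i + e * A i j + e * A j i + e ^ 2 * A j j ∧
      A i i + e * A i j + e * A j i + e ^ 2 * A j j ≤ C * (1 + e ^ 2) := by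
    have hξ := h (Pi.single i 1 + Pi.single j e)
    simp [Pi.single_apply, add_sq, add_mul, mul_add, Finset.sum_add_distrib, ite_mul, mul_ite,
      hij.symm] at hξ
    constructor <;> linarith [hξ.1, hξ.2]
  have hsymm : A j i = A i j := hA.apply i j
  obtain ⟨hplus_nonneg, hplus_le⟩ := hpair 1
  obtain ⟨hminus_nonneg, hminus_le⟩ := hpair (-1)
  refine abs_le.2 ⟨?_, ?_⟩ <;> nlinarith [hdiag i, hdiag j]

theorem abs_intervalIntegral_le_mul_abs_sub_of_abs_le_deriv {b f : ℝ → ℝ} (hb : ContDiff ℝ 1 b)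
    {K : ℝ} (hK : 0 ≤ K) {u v : ℝ} (hf : ∀ᵐ t, t ∈ uIoc u v → |f t| ≤ K * deriv b t) :
    |∫ t in u..v, f t| ≤ K * |b v - b u| := by
  have hcont : Continuous (deriv b) := hb.continuous_deriv le_rfl
  have hf' : ∀ᵐ t ∂volume.restrict (uIoc u v), ‖f t‖ ≤ K * deriv b t :=
    (ae_restrict_iff' measurableSet_uIoc).2 (by simpa only [Real.norm_eq_abs] using hf)
  calc |∫ t in u..v, f t| ≤ |∫ t in u..v, K * deriv b t| := by
        simpa only [Real.norm_eq_abs] using intervalIntegral.norm_integral_le_abs_of_norm_le hf'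
          ((hcont.intervalIntegrable u v).const_mul K)
    _ = K * |b v - b u| := by
        rw [intervalIntegral.integral_const_mul, intervalIntegral.integral_deriv_eq_sub
          (fun t _ => hb.differentiable one_ne_zero t) (hcont.intervalIntegrable u v),
          abs_mul, abs_of_nonneg hK]

theorem lipschitzOnWith_comp_invFun_image {α β γ : Type*} [Nonempty α] [PseudoMetricSpace α]
    [PseudoMetricSpace β] [PseudoMetricSpace γ] {b : α → β} (hb : Function.Injective b)
    {F : α → γ} {s : Set α} {K : ℝ≥0}
    (hF : ∀ u ∈ s, ∀ v ∈ s, dist (F u) (F v) ≤ K * dist (b u) (b v)) :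
    LipschitzOnWith K (F ∘ Function.invFun b) (b '' s) := by
  refine LipschitzOnWith.of_dist_le_mul ?_
  rintro _ ⟨u, hu, rfl⟩ _ ⟨v, hv, rfl⟩
  simpa only [Function.comp_apply, Function.leftInverse_invFun hb _] using hF u hu v hv

theorem exists_lipschitzOnWith_primitive_comp_invFun {b f : ℝ → ℝ} (hb : ContDiff ℝ 1 b)
    (hmono : StrictMono b) (hf : Continuous f) {C : ℝ} (hC : 0 ≤ C)
    (hbound : ∀ᵐ t, |f t| ≤ C * deriv b t ^ 2) {x y : ℝ} (hsub : Icc x y ⊆ range b) :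
    ∃ c : ℝ≥0, LipschitzOnWith c ((fun u => ∫ t in (0 : ℝ)..u, f t) ∘ Function.invFun b)
      (Icc x y) := by
  rcases lt_or_ge y x with hyx | hxy
  · exact ⟨0, by simp [Icc_eq_empty_of_lt hyx]⟩
  obtain ⟨p, rfl⟩ := hsub (left_mem_Icc.2 hxy)
  obtain ⟨q, rfl⟩ := hsub (right_mem_Icc.2 hxy)
  have hpq : p ≤ q := hmono.le_iff_le.1 hxy
  obtain ⟨M, hM⟩ := isCompact_Icc.exists_bound_of_continuousOn
    (hb.continuous_deriv le_rfl).continuousOn (s := Icc p q)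
  have hCM : 0 ≤ C * M := mul_nonneg hC ((norm_nonneg _).trans (hM p ⟨le_rfl, hpq⟩))
  refine ⟨(C * M).toNNReal, (lipschitzOnWith_comp_invFun_image hmono.injective ?_).mono
    (intermediate_value_Icc hpq hb.continuous.continuousOn)⟩
  intro u hu v hv
  rw [Real.dist_eq, Real.dist_eq, Real.coe_toNNReal _ hCM,
    intervalIntegral.integral_interval_sub_left (hf.intervalIntegrable _ _)
      (hf.intervalIntegrable _ _)]
  refine abs_intervalIntegral_le_mul_abs_sub_of_abs_le_deriv hb hCM ?_
  filter_upwards [hbound] with t ht htuv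
  have hderiv_nonneg : 0 ≤ deriv b t := hmono.monotone.deriv_nonneg
  have hderiv_le : deriv b t ≤ M :=
    (le_abs_self _).trans (hM t (uIcc_subset_Icc hv hu (uIoc_subset_uIcc htuv)))
  calc |f t| ≤ C * deriv b t ^ 2 := ht
    _ = C * deriv b t * deriv b t := by ring
    _ ≤ C * M * deriv b t := by gcongr

theorem parabolic_flux_locally_lipschitz_of_b_general
    (b : ℝ → ℝ) (hb : ContDiff ℝ 1 b)
    (hb' : ∀ᵐ u : ℝ, 0 < deriv b u)
    (d'' : ℕ)
    (bm : ℝ → Matrix (Fin d'') (Fin d'') ℝ)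
    (hbmcont : ∀ i j, Continuous fun u => bm u i j)
    (hbmsymm : ∀ u : ℝ, (bm u).IsSymm)
    (Λ : ℝ) (hΛ : 1 ≤ Λ)
    (hquad : ∀ᵐ u : ℝ, ∀ ξ : Fin d'' → ℝ,
      deriv b u ^ 2 * ∑ j, ξ j ^ 2 ≤ ∑ i, ∑ j, ξ i * bm u i j * ξ j ∧
      ∑ i, ∑ j, ξ i * bm u i j * ξ j ≤ Λ * (deriv b u ^ 2 * ∑ j, ξ j ^ 2)) :
    StrictMono b ∧
    ∀ i j : Fin d'', ∃ Bt : ℝ → ℝ,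
      (∀ x y : ℝ, Set.Icc x y ⊆ Set.range b →
        ∃ c : ℝ≥0, LipschitzOnWith c Bt (Set.Icc x y)) ∧
      ∀ u : ℝ, (∫ ζ in (0 : ℝ)..u, bm ζ i j) = Bt (b u) := by
  have hmono : StrictMono b := hb.strictMono_of_ae_deriv_pos hb'
  have hentry : ∀ᵐ u, ∀ i j, |bm u i j| ≤ Λ * deriv b u ^ 2 := by
    filter_upwards [hquad] with u hu i j
    refine abs_entry_le_of_quadForm_le (hbmsymm u) (fun ξ => ⟨?_, by linarith [hu ξ]⟩) i j
    exact (mul_nonneg (sq_nonneg _) (Finset.sum_nonneg fun _ _ => sq_nonneg _)).trans (hu ξ).1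
  refine ⟨hmono, fun i j => ⟨(fun u => ∫ ζ in (0 : ℝ)..u, bm ζ i j) ∘ Function.invFun b,
    fun x y hsub => ?_, fun u => by simp [Function.leftInverse_invFun hmono.injective u]⟩⟩
  exact exists_lipschitzOnWith_primitive_comp_invFun hb hmono (hbmcont i j) (by linarith)
    (hentry.mono fun u hu => hu i j) hsub

/-- **`B` is a locally Lipschitz function of `b`.**
Let `b ∈ C¹(ℝ)` with `b' > 0` a.e., and let `(b_{ij})` be continuous symmetric matrices
satisfying `b'(u)²|ξ|² ≤ Σ b_{ij}(u) ξ_i ξ_j ≤ Λ b'(u)²|ξ|²` for a.e. `u` and all `ξ`.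
Setting `B_{ij}(u) = ∫_0^u b_{ij}(ζ) dζ`, the function `b` is strictly increasing and
there are functions `B̃_{ij}`, Lipschitz on every compact subinterval of the range of
`b`, with `B_{ij}(u) = B̃_{ij}(b(u))` for every `u`. -/
theorem parabolic_flux_locally_lipschitz_of_b
    (b : ℝ → ℝ) (hb : ContDiff ℝ 1 b)
    (hb' : ∀ᵐ u : ℝ, 0 < deriv b u)
    (d'' : ℕ) (hd'' : 1 ≤ d'')
    (bm : ℝ → Matrix (Fin d'') (Fin d'') ℝ)
    (hbmcont : ∀ i j, Continuous fun u => bm u i j)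
    (hbmsymm : ∀ u : ℝ, (bm u).IsSymm)
    (Λ : ℝ) (hΛ : 1 ≤ Λ)
    (hquad : ∀ᵐ u : ℝ, ∀ ξ : Fin d'' → ℝ,
      deriv b u ^ 2 * ∑ j, ξ j ^ 2 ≤ ∑ i, ∑ j, ξ i * bm u i j * ξ j ∧
      ∑ i, ∑ j, ξ i * bm u i j * ξ j ≤ Λ * (deriv b u ^ 2 * ∑ j, ξ j ^ 2)) :
    StrictMono b ∧
    ∀ i j : Fin d'', ∃ Bt : ℝ → ℝ,
      (∀ x y : ℝ, Set.Icc x y ⊆ Set.range b →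
        ∃ c : ℝ≥0, LipschitzOnWith c Bt (Set.Icc x y)) ∧
      ∀ u : ℝ, (∫ ζ in (0 : ℝ)..u, bm ζ i j) = Bt (b u) :=
  parabolic_flux_locally_lipschitz_of_b_general b hb hb' d'' bm hbmcont hbmsymm Λ hΛ hquad
end

section
/- Let b ∈ C¹(ℝ) with b'(u) > 0 for almost every u ∈ ℝ, let d'' ≥ 1 and Λ ≥ 1, and let σ_{ij} : ℝ → ℝ (1 ≤ i, j ≤ d'') be continuous functions such that for every u the matrix (σ_{ij}(u)) is symmetric positive semidefinite and, for almost every u ∈ ℝ and all ξ ∈ ℝ^{d''}, b'(u) |ξ|² ≤ Σ_{i,j} σ_{ij}(u) ξ_i ξ_j ≤ Λ^{1/2} b'(u) |ξ|². Define Σ_{ij}(u) = ∫_0^u σ_{ij}(ζ) dζ. Then for each pair i, j there exists a Lipschitz function Σ̃_{ij} : b(ℝ) → ℝ, with Lipschitz constant at most Λ^{1/2}, such that Σ_{ij}(u) = Σ̃_{ij}(b(u)) for all u ∈ ℝ. -/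
open MeasureTheory NNReal

/-!
Each entry of a positive semidefinite matrix is bounded by the largest diagonal entry, since
its 2 × 2 principal minors are nonnegative; testing the upper quadratic bound on unit vectors
therefore gives `|σ_{ij}| ≤ Λ^{1/2} b'` almost everywhere. Integrating, and using
`∫ b' = Δb`, yields `|Σ_{ij}(v) - Σ_{ij}(u)| ≤ Λ^{1/2} |b(v) - b(u)|`. In particular
`Σ_{ij}` is constant on the fibres of `b`, so it factors through `b` by a map which is
Lipschitz on `b(ℝ)` with the same constant.
-/

namespace Matrix.PosSemidef

variable {n : Type*} {A : Matrix n n ℝ}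

theorem apply_sq_le_mul_diag (hA : A.PosSemidef) (i j : n) : A i j ^ 2 ≤ A i i * A j j := by
  have hdet := (hA.submatrix ![i, j]).det_nonneg
  have hsym : A j i = A i j := hA.isHermitian.apply i j
  rw [det_fin_two] at hdet
  simp only [submatrix_apply, cons_val_zero, cons_val_one, hsym] at hdet
  nlinarith

theorem abs_apply_le_of_diag_le (hA : A.PosSemidef) {c : ℝ} (hc : ∀ k, A k k ≤ c) (i j : n) :
    |A i j| ≤ c := by
  have hc₀ : 0 ≤ c := hA.diag_nonneg.trans (hc i)
  refine abs_le_of_sq_le_sq ?_ hc₀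
  calc A i j ^ 2 ≤ A i i * A j j := hA.apply_sq_le_mul_diag i j
    _ ≤ c ^ 2 := by
      rw [sq]
      exact mul_le_mul (hc i) (hc j) hA.diag_nonneg hc₀

end Matrix.PosSemidef

theorem dist_integral_le_mul_dist_of_abs_le_mul_deriv {f b : ℝ → ℝ} (hf : Continuous f)
    (hb : ContDiff ℝ 1 b) {K : ℝ} (hK : 0 ≤ K) (hfb : ∀ᵐ x, |f x| ≤ K * deriv b x)
    (u v : ℝ) :
    dist (∫ x in (0 : ℝ)..u, f x) (∫ x in (0 : ℝ)..v, f x) ≤ K * dist (b u) (b v) := by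
  wlog huv : u ≤ v generalizing u v
  · rw [dist_comm, dist_comm (b u)]
    exact this v u (le_of_not_ge huv)
  have hb'cont : Continuous (deriv b) := hb.continuous_deriv le_rfl
  have hftc : ∫ x in u..v, deriv b x = b v - b u :=
    intervalIntegral.integral_deriv_eq_sub (fun x _ => hb.differentiable one_ne_zero x)
      (hb'cont.intervalIntegrable u v)
  rw [dist_comm, dist_comm (b u), Real.dist_eq, Real.dist_eq,
    intervalIntegral.integral_interval_sub_left (hf.intervalIntegrable 0 v)
      (hf.intervalIntegrable 0 u)]
  calc |∫ x in u..v, f x| ≤ ∫ x in u..v, |f x| :=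
        intervalIntegral.abs_integral_le_integral_abs huv
    _ ≤ ∫ x in u..v, K * deriv b x :=
        intervalIntegral.integral_mono_ae huv (hf.abs.intervalIntegrable u v)
          ((continuous_const.mul hb'cont).intervalIntegrable u v) hfb
    _ = K * (b v - b u) := by rw [intervalIntegral.integral_const_mul, hftc]
    _ ≤ K * |b v - b u| := mul_le_mul_of_nonneg_left (le_abs_self _) hK

theorem exists_lipschitzOnWith_range_of_dist_le_mul {α β γ : Type*} [Nonempty α]
    [PseudoMetricSpace β] [MetricSpace γ] {f : α → β} {F : α → γ} {K : ℝ≥0}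
    (hF : ∀ u v, dist (F u) (F v) ≤ K * dist (f u) (f v)) :
    ∃ G : β → γ, LipschitzOnWith K G (Set.range f) ∧ ∀ u, F u = G (f u) := by
  have hinv : ∀ u, f (Function.invFun f (f u)) = f u := fun u => Function.invFun_eq ⟨u, rfl⟩
  refine ⟨F ∘ Function.invFun f, ?_, fun u => ?_⟩
  · rw [lipschitzOnWith_iff_dist_le_mul]
    rintro _ ⟨u, rfl⟩ _ ⟨v, rfl⟩
    simpa only [Function.comp_apply, hinv] using
      hF (Function.invFun f (f u)) (Function.invFun f (f v))
  · refine (dist_le_zero.1 ?_).symm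
    simpa only [Function.comp_apply, hinv, dist_self, mul_zero] using hF (Function.invFun f (f u)) u

theorem sigma_lipschitz_of_b_general
    (b : ℝ → ℝ) (hb : ContDiff ℝ 1 b)
    (d'' : ℕ) (Λ : ℝ)
    (σm : ℝ → Matrix (Fin d'') (Fin d'') ℝ)
    (hσcont : ∀ i j, Continuous fun u => σm u i j)
    (hσpsd : ∀ u : ℝ, (σm u).PosSemidef)
    (hquad : ∀ᵐ u : ℝ, ∀ ξ : Fin d'' → ℝ,
      deriv b u * ∑ j, ξ j ^ 2 ≤ ∑ i, ∑ j, ξ i * σm u i j * ξ j ∧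
      ∑ i, ∑ j, ξ i * σm u i j * ξ j ≤ Real.sqrt Λ * (deriv b u * ∑ j, ξ j ^ 2)) :
    ∀ i j : Fin d'', ∃ St : ℝ → ℝ,
      LipschitzOnWith (Real.toNNReal (Real.sqrt Λ)) St (Set.range b) ∧
      ∀ u : ℝ, (∫ ζ in (0 : ℝ)..u, σm ζ i j) = St (b u) := by
  intro i j
  have hbound : ∀ᵐ u, |σm u i j| ≤ Real.sqrt Λ * deriv b u := by
    filter_upwards [hquad] with u hu
    refine (hσpsd u).abs_apply_le_of_diag_le (fun k => ?_) i j
    simpa [Pi.single_apply] using (hu (Pi.single k 1)).2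
  refine exists_lipschitzOnWith_range_of_dist_le_mul fun u v => ?_
  rw [Real.coe_toNNReal _ (Real.sqrt_nonneg Λ)]
  exact dist_integral_le_mul_dist_of_abs_le_mul_deriv (hσcont i j) hb (Real.sqrt_nonneg Λ)
    hbound u v

/-- **`Σ` is a Lipschitz function of `b`, with constant at most `Λ^{1/2}`.**
Let `b ∈ C¹(ℝ)` with `b' > 0` a.e., and let `(σ_{ij})` be continuous symmetric positive
semidefinite matrices satisfying `b'(u)|ξ|² ≤ Σ σ_{ij}(u) ξ_i ξ_j ≤ Λ^{1/2} b'(u)|ξ|²`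
for a.e. `u` and all `ξ`.  Setting `Σ_{ij}(u) = ∫_0^u σ_{ij}(ζ) dζ`, there exist
functions `Σ̃_{ij}`, Lipschitz on the range of `b` with Lipschitz constant at most
`Λ^{1/2}`, such that `Σ_{ij}(u) = Σ̃_{ij}(b(u))` for all `u`. -/
theorem sigma_lipschitz_of_b
    (b : ℝ → ℝ) (hb : ContDiff ℝ 1 b)
    (hb' : ∀ᵐ u : ℝ, 0 < deriv b u)
    (d'' : ℕ) (hd'' : 1 ≤ d'') (Λ : ℝ) (hΛ : 1 ≤ Λ)
    (σm : ℝ → Matrix (Fin d'') (Fin d'') ℝ)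
    (hσcont : ∀ i j, Continuous fun u => σm u i j)
    (hσpsd : ∀ u : ℝ, (σm u).PosSemidef)
    (hquad : ∀ᵐ u : ℝ, ∀ ξ : Fin d'' → ℝ,
      deriv b u * ∑ j, ξ j ^ 2 ≤ ∑ i, ∑ j, ξ i * σm u i j * ξ j ∧
      ∑ i, ∑ j, ξ i * σm u i j * ξ j ≤ Real.sqrt Λ * (deriv b u * ∑ j, ξ j ^ 2)) :
    ∀ i j : Fin d'', ∃ St : ℝ → ℝ,
      LipschitzOnWith (Real.toNNReal (Real.sqrt Λ)) St (Set.range b) ∧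
      ∀ u : ℝ, (∫ ζ in (0 : ℝ)..u, σm ζ i j) = St (b u) :=
  sigma_lipschitz_of_b_general b hb d'' Λ σm hσcont hσpsd hquad
end
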